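/- arXiv:math/0408400 — 6 statements merged into one kernel-verified Lean document; each statement's English description precedes it below -/
import Mathlib

section
/- With N = { π ∈ 𝔖(τ) : lim_ω #_fix(π(i))/τ(i) = 1 }, the function π ↦ lim_ω #_t(π(i))/τ(i) is constant on cosets of N, i.e., the average number of t-cycles is well defined on the quotient 𝔖(τ/ω) = 𝔖(τ)/N. -/
open Filter

/-- The number of fixed points of a permutation of a finite type. -/
def fixCount {X : Type*} [Fintype X] [DecidableEq X] (α : Equiv.Perm X) : ℕ :=
  (Finset.univ.filter fun x => α x = x).card

/-- The number of `t`-cycles (orbits of size exactly `t`) of a permutation. -/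
noncomputable def cycleCount {X : Type*} [Fintype X] [DecidableEq X]
    (α : Equiv.Perm X) (t : ℕ) : ℕ :=
  (Finset.univ.filter fun x => Function.minimalPeriod (⇑α) x = t).card / t

lemma mp_congr {X : Type*} {f g : X → X} {x : X} (h : ∀ n, f^[n] x = g^[n] x) :
    Function.minimalPeriod f x = Function.minimalPeriod g x := by
  have hip : ∀ n, Function.IsPeriodicPt f n x ↔ Function.IsPeriodicPt g n x := fun n => by
    simp [Function.IsPeriodicPt, Function.IsFixedPt, h n]
  have hpp : x ∈ Function.periodicPts f ↔ x ∈ Function.periodicPts g := by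
    simp only [Function.periodicPts, Set.mem_setOf_eq, hip]
  by_cases hx : x ∈ Function.periodicPts f
  · have hx' := hpp.1 hx
    refine le_antisymm ?_ ?_
    · exact ((hip _).2 (Function.isPeriodicPt_minimalPeriod g x)).minimalPeriod_le
        (Function.minimalPeriod_pos_of_mem_periodicPts hx')
    · exact ((hip _).1 (Function.isPeriodicPt_minimalPeriod f x)).minimalPeriod_le
        (Function.minimalPeriod_pos_of_mem_periodicPts hx)
  · rw [Function.minimalPeriod_eq_zero_of_notMem_periodicPts hx,
      Function.minimalPeriod_eq_zero_of_notMem_periodicPts (fun h' => hx (hpp.2 h'))]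

lemma fixCount_le {d : ℕ} (β : Equiv.Perm (Fin d)) : fixCount β ≤ d := by
  classical
  exact le_trans (Finset.card_filter_le Finset.univ _) (by simp)

lemma fixCount_inv {d : ℕ} (a : Equiv.Perm (Fin d)) : fixCount a⁻¹ = fixCount a := by
  unfold fixCount
  congr 1
  ext x
  simp only [Finset.mem_filter, Finset.mem_univ, true_and]
  rw [Equiv.Perm.inv_eq_iff_eq, eq_comm]

lemma fixCount_mul_comm {d : ℕ} (a b : Equiv.Perm (Fin d)) :
    fixCount (a * b) = fixCount (b * a) := by
  unfold fixCount
  apply Finset.card_bij (fun x _ => b x)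
  · intro x hx
    simp only [Finset.mem_filter, Finset.mem_univ, true_and] at *
    simp only [Equiv.Perm.mul_apply] at *
    rw [hx]
  · intro x hx y hy hxy; exact b.injective hxy
  · intro y hy
    simp only [Finset.mem_filter, Finset.mem_univ, true_and] at *
    simp only [Equiv.Perm.mul_apply] at *
    exact ⟨a y, by rw [hy], hy⟩

lemma cycleCount_le {d : ℕ} (α β : Equiv.Perm (Fin d)) (t : ℕ) :
    cycleCount α t ≤ cycleCount (α * β) t + (d - fixCount β) := by
  classical
  rcases Nat.eq_zero_or_pos t with rfl | ht
  · simp [cycleCount]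
  set A : Finset (Fin d) :=
    Finset.univ.filter (fun x => Function.minimalPeriod (⇑α) x = t) with hA
  set B : Finset (Fin d) :=
    Finset.univ.filter (fun x => Function.minimalPeriod (⇑(α * β)) x = t) with hB
  set G : Finset (Fin d) :=
    Finset.univ.filter (fun x => ∀ n, β ((⇑α)^[n] x) = (⇑α)^[n] x) with hG
  -- iterates agree on G
  have hiter : ∀ x ∈ G, ∀ n, (⇑(α * β))^[n] x = (⇑α)^[n] x := by
    intro x hx n
    simp only [hG, Finset.mem_filter] at hx
    induction n with
    | zero => rfl
    | succ n ih =>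
      rw [Function.iterate_succ_apply', Function.iterate_succ_apply', ih]
      show α (β ((⇑α)^[n] x)) = _
      rw [hx.2 n]
  have hsub : A ∩ G ⊆ B := by
    intro x hx
    rw [Finset.mem_inter] at hx
    obtain ⟨hxA, hxG⟩ := hx
    simp only [hA, hB, Finset.mem_filter, Finset.mem_univ, true_and] at *
    rw [mp_congr (hiter x hxG)]
    exact hxA
  -- each x in A \ G has a small bad exponent
  have hbad : ∀ x ∈ A \ G, ∃ m, m < t ∧ β ((⇑α)^[m] x) ≠ (⇑α)^[m] x := by
    intro x hx
    rw [Finset.mem_sdiff] at hx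
    obtain ⟨hxA, hxG⟩ := hx
    simp only [hA, Finset.mem_filter, Finset.mem_univ, true_and] at hxA
    simp only [hG, Finset.mem_filter, Finset.mem_univ, true_and, not_forall] at hxG
    obtain ⟨n, hn⟩ := hxG
    refine ⟨n % t, Nat.mod_lt _ ht, ?_⟩
    have := Function.iterate_mod_minimalPeriod_eq (f := ⇑α) (x := x) (n := n)
    rw [hxA] at this
    rw [this]
    exact hn
  -- injection from A \ G into range t × nonfixed points of β
  have hcard2 : (A \ G).card ≤ t * (d - fixCount β) := by
    set P : Fin d → Prop := fun x => ∃ m, m < t ∧ β ((⇑α)^[m] x) ≠ (⇑α)^[m] x with hP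
    have hPAG : ∀ x ∈ A \ G, P x := hbad
    set F : Fin d → ℕ × Fin d := fun x =>
      if hx : P x then (Nat.find hx, (⇑α)^[Nat.find hx] x) else (0, x) with hF
    have hmem : ∀ x ∈ A \ G,
        F x ∈ (Finset.range t) ×ˢ (Finset.univ.filter fun y => β y ≠ y) := by
      intro x hx
      have hp := hPAG x hx
      obtain ⟨h1, h2⟩ := Nat.find_spec hp
      rw [hF]
      simp only [dif_pos hp]
      exact Finset.mem_product.2 ⟨Finset.mem_range.2 h1,
        Finset.mem_filter.2 ⟨Finset.mem_univ _, h2⟩⟩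
    have hinj : Set.InjOn F ↑(A \ G) := by
      intro x hx y hy hxy
      have hpx := hPAG x (by simpa using hx)
      have hpy := hPAG y (by simpa using hy)
      rw [hF] at hxy
      simp only [dif_pos hpx, dif_pos hpy, Prod.mk.injEq] at hxy
      obtain ⟨h1, h2⟩ := hxy
      rw [h1] at h2
      exact (Function.Injective.iterate α.injective _) h2
    have := Finset.card_le_card_of_injOn F hmem hinj
    refine le_trans this ?_
    rw [Finset.card_product, Finset.card_range]
    apply Nat.mul_le_mul_left
    have : (Finset.univ.filter fun y : Fin d => ¬ (β y = y)) =
        Finset.univ \ (Finset.univ.filter fun y => β y = y) := Finset.filter_not _ _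
    rw [this, Finset.card_sdiff_of_subset (Finset.filter_subset _ _)]
    simp [fixCount]
  have hsplit : A.card ≤ B.card + t * (d - fixCount β) := by
    calc A.card = (A ∩ G).card + (A \ G).card := (Finset.card_inter_add_card_sdiff A G).symm
    _ ≤ B.card + t * (d - fixCount β) :=
        Nat.add_le_add (Finset.card_le_card hsub) hcard2
  show A.card / t ≤ B.card / t + (d - fixCount β)
  calc A.card / t ≤ (B.card + t * (d - fixCount β)) / t := Nat.div_le_div_right hsplit
  _ = B.card / t + (d - fixCount β) := Nat.add_mul_div_left _ _ ht

lemma abs_bound {d : ℕ} (hd : 0 < d) (π ρ : Equiv.Perm (Fin d)) (t : ℕ) :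
    |(cycleCount (ρ) t : ℝ) / d - (cycleCount (π) t : ℝ) / d| ≤
      1 - (fixCount (π * ρ⁻¹) : ℝ) / d := by
  set f := fixCount (π * ρ⁻¹) with hf
  have hfd : f ≤ d := fixCount_le _
  have h1 : cycleCount ρ t ≤ cycleCount π t + (d - f) := by
    have := cycleCount_le ρ (ρ⁻¹ * π) t
    rw [mul_inv_cancel_left] at this
    rw [fixCount_mul_comm] at this
    exact this
  have h2 : cycleCount π t ≤ cycleCount ρ t + (d - f) := by
    have := cycleCount_le π (π⁻¹ * ρ) t
    rw [mul_inv_cancel_left] at this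
    have he : fixCount (π⁻¹ * ρ) = f := by
      rw [fixCount_mul_comm, hf, ← fixCount_inv (π * ρ⁻¹), mul_inv_rev, inv_inv]
    rwa [he] at this
  have hdpos : (0:ℝ) < d := by exact_mod_cast hd
  rw [div_sub_div_same, abs_div, abs_of_pos hdpos, div_le_iff₀ hdpos, sub_mul, one_mul,
    div_mul_cancel₀ _ (ne_of_gt hdpos)]
  rw [abs_sub_le_iff]
  constructor
  · have := (Nat.cast_le (α := ℝ)).2 h1
    push_cast [Nat.cast_sub hfd] at this
    linarith
  · have := (Nat.cast_le (α := ℝ)).2 h2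
    push_cast [Nat.cast_sub hfd] at this
    linarith

/-- If `π` and `ρ` lie in the same coset of `N = { π : lim_ω #_fix(π(i))/τ(i) = 1 }`,
then the average numbers of `t`-cycles of `π` and `ρ` coincide: the function
`π ↦ lim_ω #_t(π(i))/τ(i)` is well defined on the quotient `𝔖(τ/ω) = 𝔖(τ)/N`. -/
theorem avg_cycleCount_well_defined {I : Type*} (τ : I → ℕ) (ω : Ultrafilter I)
    (hτ : Tendsto τ (ω : Filter I) atTop) (t : ℕ)
    (π ρ : ∀ i, Equiv.Perm (Fin (τ i)))
    (hcoset : Tendsto (fun i => (fixCount ((π * ρ⁻¹) i) : ℝ) / τ i) (ω : Filter I) (nhds 1))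
    (c : ℝ) :
    Tendsto (fun i => (cycleCount (π i) t : ℝ) / τ i) (ω : Filter I) (nhds c) ↔
      Tendsto (fun i => (cycleCount (ρ i) t : ℝ) / τ i) (ω : Filter I) (nhds c) := by
  have key : ∀ (π ρ : ∀ i, Equiv.Perm (Fin (τ i))),
      Tendsto (fun i => (fixCount ((π * ρ⁻¹) i) : ℝ) / τ i) (ω : Filter I) (nhds 1) →
      Tendsto (fun i => (cycleCount (π i) t : ℝ) / τ i) (ω : Filter I) (nhds c) →
      Tendsto (fun i => (cycleCount (ρ i) t : ℝ) / τ i) (ω : Filter I) (nhds c) := by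
    intro π ρ hco h
    have hd : ∀ᶠ i in (ω : Filter I), 1 ≤ τ i := hτ.eventually_ge_atTop 1
    have hbound : ∀ᶠ i in (ω : Filter I),
        ‖(cycleCount (ρ i) t : ℝ) / τ i - (cycleCount (π i) t : ℝ) / τ i‖ ≤
          1 - (fixCount ((π * ρ⁻¹) i) : ℝ) / τ i := by
      filter_upwards [hd] with i hi
      rw [Real.norm_eq_abs]
      exact abs_bound hi (π i) (ρ i) t
    have hg : Tendsto (fun i => 1 - (fixCount ((π * ρ⁻¹) i) : ℝ) / τ i) (ω : Filter I)
        (nhds 0) := by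
      have := (tendsto_const_nhds (x := (1:ℝ)) (f := (ω : Filter I))).sub hco
      simpa using this
    have hdiff := squeeze_zero_norm' hbound hg
    have := h.add hdiff
    simp only [add_zero] at this
    convert this using 2 with i
    ring
  constructor
  · exact key π ρ hcoset
  · refine key ρ π ?_
    have he : ∀ i, fixCount ((ρ * π⁻¹) i) = fixCount ((π * ρ⁻¹) i) := by
      intro i
      show fixCount (ρ i * (π i)⁻¹) = fixCount (π i * (ρ i)⁻¹)
      rw [← fixCount_inv (ρ i * (π i)⁻¹), mul_inv_rev, inv_inv]
    simpa only [he] using hcoset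
end

section
/- Given any sequence (P_t)_{t≥1} of nonnegative reals with ∑_{t=1}^∞ t · P_t ≤ 1, there exists an element π ∈ 𝔖(τ/ω) with #_t(π) = P_t for all t. -/
open Filter

section Aux

open Function

theorem CycleAux.minimalPeriod_of_semiconj {X Y : Type*} {g : X → Y} (hg : Function.Injective g)
    {f₁ : X → X} {f₂ : Y → Y} (h : Function.Semiconj g f₁ f₂) (x : X) :
    Function.minimalPeriod f₂ (g x) = Function.minimalPeriod f₁ x := by
  have hiter : ∀ k, f₂^[k] (g x) = g (f₁^[k] x) := fun k => ((h.iterate_right k).eq x).symm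
  have hiff : ∀ k, IsPeriodicPt f₂ k (g x) ↔ IsPeriodicPt f₁ k x := by
    intro k
    rw [IsPeriodicPt, IsPeriodicPt, IsFixedPt, IsFixedPt, hiter, hg.eq_iff]
  by_cases hx : x ∈ periodicPts f₁
  · have h₁ := minimalPeriod_pos_of_mem_periodicPts hx
    have h₂ : g x ∈ periodicPts f₂ := by
      obtain ⟨k, hk, hk'⟩ := hx
      exact ⟨k, hk, (hiff k).2 hk'⟩
    have h₃ := minimalPeriod_pos_of_mem_periodicPts h₂
    exact le_antisymm
      (((hiff _).2 (isPeriodicPt_minimalPeriod f₁ x)).minimalPeriod_le h₁)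
      (((hiff _).1 (isPeriodicPt_minimalPeriod f₂ (g x))).minimalPeriod_le h₃)
  · rw [minimalPeriod_eq_zero_of_notMem_periodicPts hx,
      minimalPeriod_eq_zero_of_notMem_periodicPts]
    intro ⟨k, hk, hk'⟩
    exact hx ⟨k, hk, (hiff k).1 hk'⟩

open Fin.NatCast in
theorem CycleAux.minimalPeriod_finRotate {m : ℕ} (hm : 0 < m) (x : Fin m) :
    Function.minimalPeriod (⇑(finRotate m)) x = m := by
  obtain ⟨m, rfl⟩ : ∃ k, m = k + 1 := ⟨m - 1, (Nat.succ_pred_eq_of_pos hm).symm⟩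
  have hit : ∀ k : ℕ, (⇑(finRotate (m + 1)))^[k] x = x + (k : Fin (m + 1)) := by
    intro k
    induction k with
    | zero => simp
    | succ k ih =>
      rw [Function.iterate_succ_apply', ih, finRotate_succ_apply, Nat.cast_add,
        Nat.cast_one, add_assoc]
  have hper : ∀ k : ℕ, IsPeriodicPt (⇑(finRotate (m + 1))) k x ↔ (m + 1) ∣ k := by
    intro k
    rw [IsPeriodicPt, IsFixedPt, hit, add_eq_left, Fin.natCast_eq_zero]
  have h1 : IsPeriodicPt (⇑(finRotate (m + 1))) (m + 1) x := (hper _).mpr dvd_rfl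
  have hpos := h1.minimalPeriod_pos (Nat.succ_pos m)
  exact le_antisymm (h1.minimalPeriod_le (Nat.succ_pos m))
    (Nat.le_of_dvd hpos ((hper _).mp (isPeriodicPt_minimalPeriod _ _)))

/-- The model type: for each `s ≤ n`, `c s` disjoint cycles of length `s`, plus one
leftover cycle of length `r`. -/
abbrev CycleAux.BT (c : ℕ → ℕ) (n r : ℕ) : Type :=
  (Σ s : Fin (n + 1), Fin (c s) × Fin (s : ℕ)) ⊕ Fin r

/-- The model permutation: rotate each block. -/
def CycleAux.sigmaB (c : ℕ → ℕ) (n r : ℕ) : Equiv.Perm (CycleAux.BT c n r) :=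
  (Equiv.sigmaCongrRight fun s : Fin (n + 1) =>
    Equiv.prodCongr (Equiv.refl (Fin (c s))) (finRotate s)).sumCongr (finRotate r)

/-- The cycle length of the block containing a point. -/
def CycleAux.LB (c : ℕ → ℕ) (n r : ℕ) : CycleAux.BT c n r → ℕ
  | .inl y => y.1
  | .inr _ => r

namespace CycleAux

lemma card_BT (c : ℕ → ℕ) (n r : ℕ) :
    Fintype.card (BT c n r) = (∑ t ∈ Finset.range (n + 1), c t * t) + r := by
  simp only [Fintype.card_sum, Fintype.card_sigma, Fintype.card_prod, Fintype.card_fin]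
  rw [Fin.sum_univ_eq_sum_range (fun t => c t * t)]

lemma card_LB (c : ℕ → ℕ) (n r : ℕ) (t : ℕ) (htn : t < n + 1) :
    (Finset.univ.filter fun y : BT c n r => LB c n r y = t).card
      = c t * t + (if r = t then t else 0) := by
  classical
  rw [Finset.card_filter, Fintype.sum_sum_type]
  congr 1
  · rw [← Finset.univ_sigma_univ, Finset.sum_sigma]
    have key : ∀ s : Fin (n + 1),
        (∑ x : Fin (c s) × Fin (s : ℕ), if LB c n r (.inl ⟨s, x⟩) = t then 1 else 0)
          = if s = (⟨t, htn⟩ : Fin (n + 1)) then c s * s else 0 := by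
      intro s
      by_cases hs : s = (⟨t, htn⟩ : Fin (n + 1))
      · subst hs
        simp [LB]
      · have h2 : (s : ℕ) ≠ t := fun h => hs (Fin.ext h)
        simp [LB, h2, hs]
    rw [Finset.sum_congr rfl fun s _ => key s, Finset.sum_ite_eq' Finset.univ]
    simp
  · by_cases h : r = t
    · subst h; simp [LB]
    · simp [LB, h]

lemma mp_sigmaB {c : ℕ → ℕ} {n r : ℕ} (y : BT c n r) :
    Function.minimalPeriod (⇑(sigmaB c n r)) y = LB c n r y := by
  cases y with
  | inr z =>
    have hsc : Function.Semiconj (Sum.inr : Fin r → BT c n r) (⇑(finRotate r))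
        (⇑(sigmaB c n r)) := fun a => rfl
    rw [minimalPeriod_of_semiconj Sum.inr_injective hsc z, minimalPeriod_finRotate z.pos]
    rfl
  | inl a =>
    obtain ⟨s, j, k⟩ := a
    have hg : Function.Injective (fun k : Fin (s : ℕ) => (Sum.inl ⟨s, (j, k)⟩ : BT c n r)) := by
      intro a b h
      simpa using h
    have hsc : Function.Semiconj (fun k : Fin (s : ℕ) => (Sum.inl ⟨s, (j, k)⟩ : BT c n r))
        (⇑(finRotate s)) (⇑(sigmaB c n r)) := fun a => rfl
    rw [minimalPeriod_of_semiconj hg hsc k, minimalPeriod_finRotate k.pos]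
    rfl

/-- The model permutation transported to `Fin n`. -/
noncomputable def permOf (c : ℕ → ℕ) (n r : ℕ) (h : Fintype.card (BT c n r) = n) :
    Equiv.Perm (Fin n) :=
  Equiv.permCongr (Fintype.equivFinOfCardEq h) (sigmaB c n r)

lemma cycleCount_permOf (c : ℕ → ℕ) (n r : ℕ) (h : Fintype.card (BT c n r) = n)
    (t : ℕ) (ht : 1 ≤ t) (htn : t < n + 1) :
    cycleCount (permOf c n r h) t = c t + (if r = t then 1 else 0) := by
  classical
  set e := Fintype.equivFinOfCardEq h with he
  have hconj : ∀ y : BT c n r,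
      Function.minimalPeriod (⇑(permOf c n r h)) (e y)
        = Function.minimalPeriod (⇑(sigmaB c n r)) y := by
    intro y
    exact minimalPeriod_of_semiconj e.injective (fun a => by simp [permOf, he]) y
  have hcard : (Finset.univ.filter fun x : Fin n =>
      Function.minimalPeriod (⇑(permOf c n r h)) x = t).card
        = (Finset.univ.filter fun y : BT c n r => LB c n r y = t).card := by
    apply Finset.card_bij' (fun x _ => e.symm x) (fun y _ => e y)
    · intro x hx
      simp only [Finset.mem_filter, Finset.mem_univ, true_and] at hx ⊢
      rw [← mp_sigmaB, ← hconj, e.apply_symm_apply]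
      exact hx
    · intro y hy
      simp only [Finset.mem_filter, Finset.mem_univ, true_and] at hy ⊢
      rw [hconj, mp_sigmaB]
      exact hy
    · intro x _; exact e.apply_symm_apply x
    · intro y _; exact e.symm_apply_apply y
  rw [cycleCount, hcard, card_LB c n r t htn]
  by_cases hr : r = t
  · subst hr
    rw [if_pos rfl, if_pos rfl, ← Nat.succ_mul, Nat.mul_div_cancel _ ht]
  · simp only [if_neg hr, add_zero, Nat.mul_div_cancel _ ht]

lemma S_le (P : ℕ → ℝ) (hP0 : ∀ t, 0 ≤ P t)
    (hPsum : ∀ m : ℕ, ∑ t ∈ Finset.range m, (t : ℝ) * P t ≤ 1) (n : ℕ) :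
    ∑ t ∈ Finset.range (n + 1), ⌊P t * n⌋₊ * t ≤ n := by
  have hcast : ((∑ t ∈ Finset.range (n + 1), ⌊P t * n⌋₊ * t : ℕ) : ℝ) ≤ n := by
    push_cast
    calc ∑ t ∈ Finset.range (n + 1), (⌊P t * n⌋₊ : ℝ) * t
        ≤ ∑ t ∈ Finset.range (n + 1), (P t * n) * t := by
          refine Finset.sum_le_sum fun t _ => ?_
          exact mul_le_mul_of_nonneg_right
            (Nat.floor_le (mul_nonneg (hP0 t) (Nat.cast_nonneg n))) (Nat.cast_nonneg t)
      _ = (n : ℝ) * ∑ t ∈ Finset.range (n + 1), (t : ℝ) * P t := by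
          rw [Finset.mul_sum]; congr 1; ext t; ring
      _ ≤ (n : ℝ) * 1 := mul_le_mul_of_nonneg_left (hPsum (n + 1)) (Nat.cast_nonneg n)
      _ = n := mul_one _
  exact_mod_cast hcast

end CycleAux

end Aux

/-- Given nonnegative reals `(P_t)_{t≥1}` with `∑_{t≥1} t · P_t ≤ 1`, there is an element
`π ∈ 𝔖(τ/ω)` (represented by an element of `𝔖(τ)`) with `#_t(π) = P_t` for all `t ≥ 1`. -/
theorem exists_elt_with_prescribed_cycle_numbers {I : Type*} (τ : I → ℕ) (ω : Ultrafilter I)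
    (hτ : Tendsto τ (ω : Filter I) atTop) (P : ℕ → ℝ)
    (hP0 : ∀ t, 0 ≤ P t)
    (hPsum : ∀ n : ℕ, ∑ t ∈ Finset.range n, (t : ℝ) * P t ≤ 1) :
    ∃ π : ∀ i, Equiv.Perm (Fin (τ i)), ∀ t : ℕ, 1 ≤ t →
      Tendsto (fun i => (cycleCount (π i) t : ℝ) / τ i) (ω : Filter I) (nhds (P t)) := by
  classical
  set c : I → ℕ → ℕ := fun i t => ⌊P t * τ i⌋₊ with hc
  set r : I → ℕ := fun i => τ i - ∑ t ∈ Finset.range (τ i + 1), c i t * t with hr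
  have hS : ∀ i, ∑ t ∈ Finset.range (τ i + 1), c i t * t ≤ τ i :=
    fun i => CycleAux.S_le P hP0 hPsum (τ i)
  have hcard : ∀ i, Fintype.card (CycleAux.BT (c i) (τ i) (r i)) = τ i := by
    intro i
    rw [CycleAux.card_BT, hr]
    exact Nat.add_sub_cancel' (hS i)
  refine ⟨fun i => CycleAux.permOf (c i) (τ i) (r i) (hcard i), ?_⟩
  intro t ht
  have hτR : Tendsto (fun i => (τ i : ℝ)) (ω : Filter I) atTop :=
    tendsto_natCast_atTop_atTop.comp hτ
  have hinv : Tendsto (fun i => 1 / (τ i : ℝ)) (ω : Filter I) (nhds 0) := by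
    simpa [one_div, Function.comp_def] using tendsto_inv_atTop_zero.comp hτR
  have hlo : Tendsto (fun i => P t - 1 / (τ i : ℝ)) (ω : Filter I) (nhds (P t)) := by
    simpa using tendsto_const_nhds.sub hinv
  have hhi : Tendsto (fun i => P t + 1 / (τ i : ℝ)) (ω : Filter I) (nhds (P t)) := by
    simpa using tendsto_const_nhds.add hinv
  have hev : ∀ᶠ i in (ω : Filter I), t ≤ τ i ∧ 1 ≤ τ i :=
    (hτ.eventually (eventually_ge_atTop t)).and (hτ.eventually (eventually_ge_atTop 1))
  refine tendsto_of_tendsto_of_tendsto_of_le_of_le' hlo hhi ?_ ?_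
  · filter_upwards [hev] with i hi
    have hnpos : (0 : ℝ) < τ i := by exact_mod_cast hi.2
    rw [CycleAux.cycleCount_permOf (c i) (τ i) (r i) (hcard i) t ht (by omega)]
    have hA' : P t * τ i < (c i t : ℝ) + 1 := Nat.lt_floor_add_one _
    have hε : (0 : ℝ) ≤ (if r i = t then (1 : ℝ) else 0) := by positivity
    have h1 : 1 / (τ i : ℝ) * τ i = 1 := one_div_mul_cancel hnpos.ne'
    rw [sub_le_iff_le_add, div_add' _ _ _ hnpos.ne', le_div_iff₀ hnpos]
    push_cast
    linarith
  · filter_upwards [hev] with i hi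
    have hnpos : (0 : ℝ) < τ i := by exact_mod_cast hi.2
    rw [CycleAux.cycleCount_permOf (c i) (τ i) (r i) (hcard i) t ht (by omega)]
    have hA : (c i t : ℝ) ≤ P t * τ i :=
      Nat.floor_le (mul_nonneg (hP0 t) (Nat.cast_nonneg _))
    have hε : (if r i = t then (1 : ℝ) else 0) ≤ 1 := by split <;> norm_num
    have hx : (P t + 1 / (τ i : ℝ)) * τ i = P t * τ i + 1 := by field_simp
    rw [div_le_iff₀ hnpos]
    push_cast
    linarith
end

section
/- Two elements π, ρ ∈ 𝔖(τ/ω) are conjugate if and only if #_t(π) = #_t(ρ) for all t ≥ 1; i.e., conjugacy classes of the universal sofic group are determined by the average cycle-number invariants. -/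
open Filter

/-- The average number of `t`-cycles `#_t(π) = lim_ω #_t(π(i))/τ(i)` (the ultralimit
exists since the sequence is bounded; `limUnder` picks it out). -/
noncomputable def avgCycle {I : Type*} (τ : I → ℕ) (ω : Ultrafilter I)
    (π : ∀ i, Equiv.Perm (Fin (τ i))) (t : ℕ) : ℝ :=
  limUnder (ω : Filter I) (fun i => (cycleCount (π i) t : ℝ) / τ i)

set_option linter.unusedSectionVars false


namespace AuxSofic
open Finset Function Equiv

variable {Y : Type*} [Fintype Y] [DecidableEq Y] {Z : Type*} [Fintype Z] [DecidableEq Z]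

/-- mass of points of minimal period `t` -/
noncomputable def pm (γ : Equiv.Perm Y) (t : ℕ) : ℕ :=
  (Finset.univ.filter fun y => Function.minimalPeriod (⇑γ) y = t).card

omit [Fintype Y] [DecidableEq Y] in
lemma mem_pp [Finite Y] (γ : Equiv.Perm Y) (y : Y) : y ∈ periodicPts ⇑γ := by
  refine ⟨orderOf γ, orderOf_pos γ, ?_⟩
  rw [IsPeriodicPt, IsFixedPt, ← Equiv.Perm.coe_pow, pow_orderOf_eq_one]
  rfl

lemma minPer_pos (γ : Equiv.Perm Y) (y : Y) : 0 < minimalPeriod (⇑γ) y :=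
  minimalPeriod_pos_of_mem_periodicPts (mem_pp γ y)

lemma minPer_congr {A B : Type*} {f : A → A} {g : B → B} {x : A} {y : B}
    (hx : x ∈ periodicPts f)
    (h : ∀ n, IsPeriodicPt f n x ↔ IsPeriodicPt g n y) :
    minimalPeriod f x = minimalPeriod g y := by
  obtain ⟨n, hn, hpn⟩ := hx
  have hy : y ∈ periodicPts g := ⟨n, hn, (h n).1 hpn⟩
  refine le_antisymm ?_ ?_
  · exact IsPeriodicPt.minimalPeriod_le (minimalPeriod_pos_of_mem_periodicPts hy)
      ((h _).2 (isPeriodicPt_minimalPeriod g y))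
  · exact IsPeriodicPt.minimalPeriod_le (minimalPeriod_pos_of_mem_periodicPts ⟨n, hn, hpn⟩)
      ((h _).1 (isPeriodicPt_minimalPeriod f x))

omit [Fintype Y] [DecidableEq Y] in
lemma isPeriodicPt_perm_iff (γ : Equiv.Perm Y) (y : Y) (n : ℕ) :
    IsPeriodicPt (⇑γ) n y ↔ (γ ^ n) y = y := by
  rw [IsPeriodicPt, IsFixedPt, Equiv.Perm.coe_pow]

omit [Fintype Y] [DecidableEq Y] in
lemma minPer_subtypePerm [Finite Y] (γ : Equiv.Perm Y) {p : Y → Prop} (hp : ∀ x, p x ↔ p (γ x))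
    (y : {x // p x}) :
    minimalPeriod (⇑(γ.subtypePerm (fun x => (hp x).symm))) y = minimalPeriod (⇑γ) (y : Y) := by
  refine (minPer_congr (mem_pp _ _) fun n => ?_).symm
  rw [isPeriodicPt_perm_iff, isPeriodicPt_perm_iff, Equiv.Perm.subtypePerm_pow,
    Equiv.Perm.subtypePerm_apply, Subtype.ext_iff]

lemma minPer_conj (σ γ : Equiv.Perm Y) (y : Y) :
    minimalPeriod (⇑(σ * γ * σ⁻¹)) (σ y) = minimalPeriod (⇑γ) y := by
  refine (minPer_congr (mem_pp _ _) fun n => ?_).symm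
  rw [isPeriodicPt_perm_iff, isPeriodicPt_perm_iff, conj_pow]
  simp [Equiv.Perm.mul_apply]

lemma pm_conj (σ γ : Equiv.Perm Y) (t : ℕ) : pm (σ * γ * σ⁻¹) t = pm γ t := by
  unfold pm
  refine (Finset.card_nbij (fun y => σ y) (fun y hy => ?_) ?_ ?_).symm
  · simp only [Finset.mem_coe, mem_filter, mem_univ, true_and] at hy ⊢
    rw [minPer_conj]; exact hy
  · intro a _ b _ hab; exact σ.injective hab
  · intro z hz
    simp only [Finset.coe_filter, Set.mem_setOf_eq, mem_univ, true_and, Set.mem_image] at hz ⊢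
    refine ⟨σ⁻¹ z, ?_, by simp⟩
    have := minPer_conj σ γ (σ⁻¹ z)
    rw [show σ (σ⁻¹ z) = z by simp] at this
    rw [← this]; exact hz

/-- each nonzero period mass is at least the period (a whole orbit witnesses it) -/
lemma le_pm_of_witness (γ : Equiv.Perm Y) {y : Y} {s : ℕ} (hs : minimalPeriod (⇑γ) y = s) :
    s ≤ pm γ s := by
  have : ∀ j : ℕ, minimalPeriod (⇑γ) ((γ ^ j) y) = s := by
    intro j
    rw [Equiv.Perm.coe_pow, minimalPeriod_apply_iterate (mem_pp γ y), hs]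
  have hinj : Set.InjOn (fun j : ℕ => (γ ^ j) y) (Set.Iio s) := by
    intro a ha b hb hab
    refine Function.iterate_injOn_Iio_minimalPeriod (f := ⇑γ) (x := y)
      (by rwa [hs]) (by rwa [hs]) ?_
    simpa [← Equiv.Perm.coe_pow] using hab
  have hcard : ((Finset.range s).image fun j => (γ ^ j) y).card = s := by
    rw [Finset.card_image_of_injOn, Finset.card_range]
    intro a ha b hb hab
    exact hinj (Finset.mem_range.mp (by simpa using ha)) (Finset.mem_range.mp (by simpa using hb)) hab
  calc s = ((Finset.range s).image fun j => (γ ^ j) y).card := hcard.symm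
    _ ≤ pm γ s := by
        apply Finset.card_le_card
        intro z hz
        simp only [Finset.mem_image, Finset.mem_range] at hz
        obtain ⟨j, _, rfl⟩ := hz
        simp only [pm, mem_filter, mem_univ, true_and]
        exact this j

lemma minPer_le_card (γ : Equiv.Perm Y) (y : Y) :
    minimalPeriod (⇑γ) y ≤ Fintype.card Y := by
  calc minimalPeriod (⇑γ) y ≤ pm γ (minimalPeriod (⇑γ) y) := le_pm_of_witness γ rfl
    _ ≤ Fintype.card Y := by
        simpa [pm] using Finset.card_le_card (Finset.filter_subset _ (univ : Finset Y))

lemma pm_pos_witness (γ : Equiv.Perm Y) {s : ℕ} (h : 0 < pm γ s) :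
    ∃ y, minimalPeriod (⇑γ) y = s := by
  obtain ⟨y, hy⟩ := Finset.card_pos.mp h
  simp only [pm, mem_filter] at hy
  exact ⟨y, hy.2⟩

/-- sum of masses over a set of periods is at most the cardinality -/
lemma sum_pm_le (γ : Equiv.Perm Y) (S : Finset ℕ) :
    ∑ t ∈ S, pm γ t ≤ Fintype.card Y := by
  classical
  have : ∀ x ∈ (univ : Finset Y).filter (fun y => minimalPeriod (⇑γ) y ∈ S),
      minimalPeriod (⇑γ) x ∈ S := fun x hx => (Finset.mem_filter.mp hx).2
  have h2 := Finset.card_eq_sum_card_fiberwise this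
  have h3 : ∀ t ∈ S, (Finset.filter (fun a => minimalPeriod (⇑γ) a = t)
      ((univ : Finset Y).filter (fun y => minimalPeriod (⇑γ) y ∈ S))).card = pm γ t := by
    intro t ht
    unfold pm
    congr 1
    ext y
    simp only [Finset.mem_filter, Finset.mem_univ, true_and]
    constructor
    · rintro ⟨_, h⟩; exact h
    · rintro h; exact ⟨h ▸ ht, h⟩
  calc ∑ t ∈ S, pm γ t = ((univ : Finset Y).filter (fun y => minimalPeriod (⇑γ) y ∈ S)).card := by
        rw [h2]; exact (Finset.sum_congr rfl h3).symm
    _ ≤ Fintype.card Y := by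
        simpa using Finset.card_le_card (Finset.filter_subset _ (univ : Finset Y))

end AuxSofic

-- appended to A
namespace AuxSofic
open Finset Function Equiv

variable {Y : Type*} [Fintype Y] [DecidableEq Y] {Z : Type*} [Fintype Z] [DecidableEq Z]

noncomputable def errSet (σ : Y ≃ Z) (γ : Equiv.Perm Y) (δ : Equiv.Perm Z) : Finset Y :=
  Finset.univ.filter fun y => σ (γ y) ≠ δ (σ y)

lemma errSet_card_symm (σ : Y ≃ Z) (γ : Equiv.Perm Y) (δ : Equiv.Perm Z) :
    (errSet σ.symm δ γ).card = (errSet σ γ δ).card := by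
  refine Finset.card_nbij (fun z => σ.symm z) ?_ ?_ ?_
  · intro z hz
    simp only [Finset.mem_coe, errSet, mem_filter, mem_univ, true_and] at hz ⊢
    intro h
    apply hz
    apply_fun σ
    simp only [Equiv.apply_symm_apply] at h ⊢
    rw [h]
  · intro a _ b _ hab; exact σ.symm.injective hab
  · intro y hy
    simp only [errSet, Finset.coe_filter, Set.mem_setOf_eq, mem_univ, true_and,
      Set.mem_image] at hy ⊢
    refine ⟨σ y, ?_, by simp⟩
    intro h
    apply hy
    apply_fun σ at h
    simp only [Equiv.apply_symm_apply, Equiv.symm_apply_apply] at h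
    exact h.symm

lemma fixCount_eq (σ γ δ : Equiv.Perm Y) :
    fixCount ((σ * γ * σ⁻¹) * δ⁻¹) = Fintype.card Y - (errSet (σ : Y ≃ Y) γ δ).card := by
  have h1 : fixCount ((σ * γ * σ⁻¹) * δ⁻¹)
      = (Finset.univ.filter fun y => σ (γ y) = δ (σ y)).card := by
    unfold fixCount
    refine (Finset.card_nbij (fun y => δ (σ y)) ?_ ?_ ?_).symm
    · intro y hy
      simp only [Finset.mem_coe, mem_filter, mem_univ, true_and] at hy ⊢
      simp [Equiv.Perm.mul_apply, hy]
    · intro a _ b _ hab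
      exact σ.injective (δ.injective hab)
    · intro x hx
      simp only [Finset.coe_filter, Set.mem_setOf_eq, mem_univ, true_and,
        Set.mem_image] at hx ⊢
      refine ⟨σ⁻¹ (δ⁻¹ x), ?_, by simp⟩
      simp only [Equiv.Perm.mul_apply] at hx
      rw [show ∀ w, σ (σ⁻¹ w) = w by simp, show δ (δ⁻¹ x) = x by simp]
      nth_rewrite 2 [← hx]
      simp
  rw [h1]
  have := Finset.card_filter_add_card_filter_not
    (s := (Finset.univ : Finset Y)) (p := fun y => σ (γ y) = δ (σ y))
  simp only [Finset.card_univ] at this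
  unfold errSet
  simp only [ne_eq] at this ⊢
  omega

lemma pm_le_pm_add (γ δ : Equiv.Perm Y) (u : ℕ) :
    pm γ u ≤ pm δ u + u * (Finset.univ.filter fun w => γ w ≠ δ w).card := by
  classical
  set D := Finset.univ.filter fun w => γ w ≠ δ w with hD
  set A := Finset.univ.filter fun y => minimalPeriod (⇑γ) y = u with hA
  set B := Finset.univ.filter fun y => minimalPeriod (⇑δ) y = u with hB
  have key : ∀ x ∈ A \ B, ∃ k, k < u ∧ γ ((γ ^ k) x) ≠ δ ((γ ^ k) x) := by
    intro x hx
    simp only [hA, hB, Finset.mem_sdiff, mem_filter, mem_univ, true_and] at hx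
    obtain ⟨hxu, hxB⟩ := hx
    by_contra hcon
    push_neg at hcon
    have hagree : ∀ k, k ≤ u → (δ ^ k) x = (γ ^ k) x := by
      intro k hk
      induction k with
      | zero => simp
      | succ m ih =>
        have hm : m ≤ u := Nat.le_of_succ_le hk
        rw [pow_succ', pow_succ', Equiv.Perm.mul_apply, Equiv.Perm.mul_apply, ih hm]
        exact (hcon m (Nat.lt_of_succ_le hk)).symm
    have hu0 : 0 < u := by rw [← hxu]; exact minPer_pos γ x
    have hper : IsPeriodicPt (⇑δ) u x := by
      rw [isPeriodicPt_perm_iff, hagree u le_rfl, ← isPeriodicPt_perm_iff, ← hxu]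
      exact isPeriodicPt_minimalPeriod _ _
    have hm1 : minimalPeriod (⇑δ) x ≤ u := hper.minimalPeriod_le hu0
    have hm2 : u ≤ minimalPeriod (⇑δ) x := by
      rw [← hxu]
      refine IsPeriodicPt.minimalPeriod_le (minPer_pos δ x) ?_
      rw [isPeriodicPt_perm_iff, ← hagree _ hm1, ← isPeriodicPt_perm_iff]
      exact isPeriodicPt_minimalPeriod _ _
    exact hxB (le_antisymm hm1 hm2)
  choose k hklt hkne using key
  have hinj : (A \ B).card ≤ u * D.card := by
    have hle := Finset.card_le_card_of_injOn
      (f := fun x => if h : x ∈ A \ B then ((k x h, (γ ^ (k x h)) x) : ℕ × Y) else (0, x))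
      (s := A \ B) (t := (Finset.range u) ×ˢ D) ?_ ?_
    · simpa [Finset.card_product, Finset.card_range, mul_comm] using hle
    · intro x hx
      simp only [Finset.mem_coe] at hx ⊢
      simp only [dif_pos hx, Finset.mem_product, Finset.mem_range]
      refine ⟨hklt x hx, ?_⟩
      simp only [hD, mem_filter, mem_univ, true_and]
      exact hkne x hx
    · intro a ha b hb hab
      simp only [Finset.mem_coe] at ha hb
      simp only [dif_pos ha, dif_pos hb, Prod.mk.injEq] at hab
      obtain ⟨h1, h2⟩ := hab
      rw [h1] at h2
      exact (γ ^ (k b hb)).injective h2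
  calc pm γ u = A.card := rfl
    _ ≤ B.card + (A \ B).card := by
        have : A ⊆ B ∪ (A \ B) := by
          intro x hx
          by_cases h : x ∈ B
          · exact Finset.mem_union_left _ h
          · exact Finset.mem_union_right _ (Finset.mem_sdiff.mpr ⟨hx, h⟩)
        calc A.card ≤ (B ∪ (A \ B)).card := Finset.card_le_card this
          _ ≤ B.card + (A \ B).card := Finset.card_union_le _ _
    _ ≤ pm δ u + u * D.card := by
        have : B.card = pm δ u := rfl
        omega

end AuxSofic

namespace AuxSofic
open Finset Function Equiv

variable {Z : Type*} [Fintype Z] [DecidableEq Z]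

lemma orbit_injOn (γ : Equiv.Perm Z) (y : Z) :
    Set.InjOn (fun j : ℕ => (γ ^ j) y) (Set.Iio (minimalPeriod (⇑γ) y)) := by
  intro a ha b hb hab
  refine Function.iterate_injOn_Iio_minimalPeriod (f := ⇑γ) (x := y) ha hb ?_
  simpa [← Equiv.Perm.coe_pow] using hab

lemma mod_succ_eq_zero {a s : ℕ} (h1 : 1 ≤ s) (h : a % s = s - 1) : (a + 1) % s = 0 := by
  have hd := Nat.div_add_mod a s
  have he : a + 1 = s * (a / s + 1) := by
    rw [Nat.mul_add, Nat.mul_one]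
    omega
  rw [he]
  exact Nat.mul_mod_right _ _

lemma mod_succ_eq {a s r : ℕ} (h : a % s = r) (hr : r + 1 < s) : (a + 1) % s = r + 1 := by
  have hd := Nat.div_add_mod a s
  have he : a + 1 = s * (a / s) + (r + 1) := by omega
  rw [he, Nat.mul_add_mod]
  exact Nat.mod_eq_of_lt hr

/-- the permutation obtained by cutting the cycle of `z₀` (of length `t`) after `s` steps -/
def cutPerm (δ : Equiv.Perm Z) (z₀ : Z) (s t : ℕ) : Equiv.Perm Z :=
  δ * Equiv.swap ((δ ^ (s-1)) z₀) ((δ ^ (t-1)) z₀)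

/-- part of the orbit of `z₀` -/
def orbIco (δ : Equiv.Perm Z) (z₀ : Z) (a b : ℕ) : Finset Z :=
  (Finset.Ico a b).image fun j => (δ ^ j) z₀

section Cut

variable (δ : Equiv.Perm Z) (z₀ : Z) (s t : ℕ)
  (h1s : 1 ≤ s) (hst : s ≤ t) (ht : minimalPeriod (⇑δ) z₀ = t)

include ht in
lemma pow_t_z₀ : (δ ^ t) z₀ = z₀ := by
  have := isPeriodicPt_minimalPeriod (⇑δ) z₀
  rw [ht] at this
  rw [Equiv.Perm.coe_pow]
  exact this

include ht in
lemma orb_inj {j k : ℕ} (hj : j < t) (hk : k < t) (h : (δ ^ j) z₀ = (δ ^ k) z₀) : j = k :=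
  orbit_injOn δ z₀ (by rw [ht]; exact hj) (by rw [ht]; exact hk) h

include h1s hst ht in
lemma cut_apply {j : ℕ} (hj : j < t) :
    cutPerm δ z₀ s t ((δ ^ j) z₀) =
      if j = s - 1 then z₀ else if j = t - 1 then (δ ^ s) z₀ else (δ ^ (j+1)) z₀ := by
  unfold cutPerm
  rcases eq_or_ne j (s-1) with h | h
  · subst h
    rw [if_pos rfl, Equiv.Perm.mul_apply, Equiv.swap_apply_left]
    have : δ ((δ ^ (t-1)) z₀) = (δ ^ t) z₀ := by
      rw [← Equiv.Perm.mul_apply, ← pow_succ']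
      congr 2
      omega
    rw [this, pow_t_z₀ δ z₀ t ht]
  · rw [if_neg h]
    rcases eq_or_ne j (t-1) with h2 | h2
    · subst h2
      rw [if_pos rfl, Equiv.Perm.mul_apply, Equiv.swap_apply_right]
      rw [← Equiv.Perm.mul_apply, ← pow_succ']
      congr 2
      omega
    · rw [if_neg h2, Equiv.Perm.mul_apply, Equiv.swap_apply_of_ne_of_ne, ← Equiv.Perm.mul_apply,
        ← pow_succ']
      · intro hc
        exact h (orb_inj δ z₀ t ht hj (by omega) hc)
      · intro hc
        exact h2 (orb_inj δ z₀ t ht hj (by omega) hc)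

include h1s hst ht in
lemma cut_pow_D (n : ℕ) : ∀ {j : ℕ}, j < s →
    ((cutPerm δ z₀ s t) ^ n) ((δ ^ j) z₀) = (δ ^ ((j + n) % s)) z₀ := by
  induction n with
  | zero => intro j hj; simp [Nat.mod_eq_of_lt hj]
  | succ n ih =>
    intro j hj
    have hstep : ((cutPerm δ z₀ s t) ^ (n+1)) ((δ ^ j) z₀)
        = cutPerm δ z₀ s t (((cutPerm δ z₀ s t) ^ n) ((δ ^ j) z₀)) := by
      rw [pow_succ', Equiv.Perm.mul_apply]
    rw [hstep, ih hj]
    set r := (j + n) % s with hr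
    have hrs : r < s := Nat.mod_lt _ (by omega)
    rw [cut_apply δ z₀ s t h1s hst ht (by omega)]
    rcases eq_or_ne r (s-1) with h | h
    · rw [if_pos h]
      have e0 : (j + (n+1)) % s = 0 := by
        have : j + (n+1) = (j + n) + 1 := by omega
        rw [this]
        exact mod_succ_eq_zero (by omega) (by omega)
      rw [e0]
      simp
    · rw [if_neg h, if_neg (by omega)]
      have e0 : (j + (n+1)) % s = r + 1 := by
        have : j + (n+1) = (j + n) + 1 := by omega
        rw [this]
        exact mod_succ_eq hr.symm (by omega)
      rw [e0]

include h1s hst ht in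
lemma cut_pow_R (n : ℕ) : ∀ {j : ℕ}, s ≤ j → j < t →
    ((cutPerm δ z₀ s t) ^ n) ((δ ^ j) z₀) = (δ ^ (s + ((j - s + n) % (t - s)))) z₀ := by
  induction n with
  | zero =>
    intro j hj1 hj2
    have e : s + ((j - s + 0) % (t - s)) = j := by
      rw [Nat.add_zero, Nat.mod_eq_of_lt (by omega)]
      omega
    rw [e]
    simp
  | succ n ih =>
    intro j hj1 hj2
    have hstep : ((cutPerm δ z₀ s t) ^ (n+1)) ((δ ^ j) z₀)
        = cutPerm δ z₀ s t (((cutPerm δ z₀ s t) ^ n) ((δ ^ j) z₀)) := by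
      rw [pow_succ', Equiv.Perm.mul_apply]
    rw [hstep, ih hj1 hj2]
    set r := (j - s + n) % (t - s) with hr
    have hrs : r < t - s := Nat.mod_lt _ (by omega)
    rw [cut_apply δ z₀ s t h1s hst ht (by omega)]
    rw [if_neg (by omega)]
    rcases eq_or_ne (s + r) (t-1) with h | h
    · rw [if_pos h]
      have e0 : (j - s + (n+1)) % (t - s) = 0 := by
        have : j - s + (n+1) = (j - s + n) + 1 := by omega
        rw [this]
        exact mod_succ_eq_zero (by omega) (by omega)
      rw [e0]
      simp
    · rw [if_neg h]
      have e0 : (j - s + (n+1)) % (t - s) = r + 1 := by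
        have : j - s + (n+1) = (j - s + n) + 1 := by omega
        rw [this]
        exact mod_succ_eq hr.symm (by omega)
      rw [e0, Nat.add_assoc]

include h1s hst ht in
lemma minPer_cut_D {j : ℕ} (hj : j < s) :
    minimalPeriod (⇑(cutPerm δ z₀ s t)) ((δ ^ j) z₀) = s := by
  have hbase : minimalPeriod (⇑(cutPerm δ z₀ s t)) z₀ = s := by
    have hper : IsPeriodicPt (⇑(cutPerm δ z₀ s t)) s z₀ := by
      rw [isPeriodicPt_perm_iff]
      have := cut_pow_D δ z₀ s t h1s hst ht s (show 0 < s by omega)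
      simpa using this
    set m := minimalPeriod (⇑(cutPerm δ z₀ s t)) z₀ with hm
    have hmpos : 0 < m := minPer_pos _ _
    have hms : m ≤ s := hper.minimalPeriod_le (by omega)
    have hmz : ((cutPerm δ z₀ s t) ^ m) z₀ = z₀ := by
      rw [← isPeriodicPt_perm_iff]
      exact isPeriodicPt_minimalPeriod _ _
    have hmod := cut_pow_D δ z₀ s t h1s hst ht m (show 0 < s by omega)
    simp only [pow_zero, Equiv.Perm.one_apply, Nat.zero_add] at hmod
    rw [hmod] at hmz
    have h0 : m % s = 0 := by
      refine orb_inj δ z₀ t ht (show m % s < t by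
        have := Nat.mod_lt m (show 0 < s by omega); omega) (show 0 < t by omega) ?_
      simpa using hmz
    have : s ∣ m := Nat.dvd_of_mod_eq_zero h0
    have := Nat.le_of_dvd hmpos this
    omega
  calc minimalPeriod (⇑(cutPerm δ z₀ s t)) ((δ ^ j) z₀)
      = minimalPeriod (⇑(cutPerm δ z₀ s t)) ((⇑(cutPerm δ z₀ s t))^[j] z₀) := by
        congr 1
        rw [← Equiv.Perm.coe_pow]
        have hp := cut_pow_D δ z₀ s t h1s hst ht j (show 0 < s by omega)
        simp only [pow_zero, Equiv.Perm.one_apply, Nat.zero_add] at hp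
        rw [hp, Nat.mod_eq_of_lt hj]
    _ = s := by rw [minimalPeriod_apply_iterate (mem_pp _ _), hbase]

include h1s hst ht in
lemma minPer_cut_R {j : ℕ} (hj1 : s ≤ j) (hj2 : j < t) :
    minimalPeriod (⇑(cutPerm δ z₀ s t)) ((δ ^ j) z₀) = t - s := by
  have hts : 0 < t - s := by omega
  have hbase : minimalPeriod (⇑(cutPerm δ z₀ s t)) ((δ ^ s) z₀) = t - s := by
    have hper : IsPeriodicPt (⇑(cutPerm δ z₀ s t)) (t-s) ((δ ^ s) z₀) := by
      rw [isPeriodicPt_perm_iff]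
      have := cut_pow_R δ z₀ s t h1s hst ht (t-s) (le_refl s) (show s < t by omega)
      simpa using this
    set m := minimalPeriod (⇑(cutPerm δ z₀ s t)) ((δ ^ s) z₀) with hm
    have hmpos : 0 < m := minPer_pos _ _
    have hms : m ≤ t - s := hper.minimalPeriod_le hts
    have hmz : ((cutPerm δ z₀ s t) ^ m) ((δ ^ s) z₀) = (δ ^ s) z₀ := by
      rw [← isPeriodicPt_perm_iff]
      exact isPeriodicPt_minimalPeriod _ _
    rw [cut_pow_R δ z₀ s t h1s hst ht m (le_refl s) (show s < t by omega)] at hmz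
    rw [show s - s + m = m by omega] at hmz
    have h0 : s + m % (t-s) = s := by
      refine orb_inj δ z₀ t ht ?_ (by omega) hmz
      have := Nat.mod_lt m hts
      omega
    have : (t - s) ∣ m := Nat.dvd_of_mod_eq_zero (by omega)
    have := Nat.le_of_dvd hmpos this
    omega
  calc minimalPeriod (⇑(cutPerm δ z₀ s t)) ((δ ^ j) z₀)
      = minimalPeriod (⇑(cutPerm δ z₀ s t)) ((⇑(cutPerm δ z₀ s t))^[j - s] ((δ ^ s) z₀)) := by
        congr 1
        rw [← Equiv.Perm.coe_pow]
        have hp := cut_pow_R δ z₀ s t h1s hst ht (j - s) (le_refl s) (show s < t by omega)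
        rw [show s - s + (j - s) = j - s by omega, Nat.mod_eq_of_lt (show j - s < t - s by omega),
          show s + (j - s) = j by omega] at hp
        rw [hp]
    _ = t - s := by rw [minimalPeriod_apply_iterate (mem_pp _ _), hbase]

include ht in
lemma mem_orbIco {a b : ℕ} {z : Z} :
    z ∈ orbIco δ z₀ a b ↔ ∃ j, a ≤ j ∧ j < b ∧ (δ ^ j) z₀ = z := by
  unfold orbIco
  simp only [Finset.mem_image, Finset.mem_Ico]
  constructor
  · rintro ⟨j, ⟨h1, h2⟩, h3⟩; exact ⟨j, h1, h2, h3⟩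
  · rintro ⟨j, h1, h2, h3⟩; exact ⟨j, ⟨h1, h2⟩, h3⟩

include ht in
lemma card_orbIco {a b : ℕ} (hb : b ≤ t) : (orbIco δ z₀ a b).card = b - a := by
  unfold orbIco
  rw [Finset.card_image_of_injOn, Nat.card_Ico]
  intro x hx y hy hxy
  simp only [Finset.coe_Ico, Set.mem_Ico] at hx hy
  exact orb_inj δ z₀ t ht (by omega) (by omega) hxy

include ht in
lemma O_invariant {z : Z} (hz : z ∈ orbIco δ z₀ 0 t) : δ z ∈ orbIco δ z₀ 0 t := by
  rw [mem_orbIco δ z₀ t ht] at hz ⊢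
  obtain ⟨j, _, hj, rfl⟩ := hz
  rcases eq_or_ne j (t-1) with h | h
  · refine ⟨0, le_refl _, by omega, ?_⟩
    subst h
    rw [← Equiv.Perm.mul_apply, ← pow_succ']
    have : t - 1 + 1 = t := by omega
    rw [this]
    simp [pow_t_z₀ δ z₀ t ht]
  · refine ⟨j+1, by omega, by omega, ?_⟩
    rw [← Equiv.Perm.mul_apply, ← pow_succ']

include ht in
lemma O_invariant' {z : Z} (hz : δ z ∈ orbIco δ z₀ 0 t) : z ∈ orbIco δ z₀ 0 t := by
  rw [mem_orbIco δ z₀ t ht] at hz ⊢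
  obtain ⟨j, _, hj, hjz⟩ := hz
  rcases Nat.eq_zero_or_pos j with h | h
  · subst h
    refine ⟨t - 1, by omega, by omega, ?_⟩
    apply δ.injective
    rw [← Equiv.Perm.mul_apply, ← pow_succ']
    have : t - 1 + 1 = t := by omega
    rw [this, pow_t_z₀ δ z₀ t ht]
    simpa using hjz
  · refine ⟨j - 1, by omega, by omega, ?_⟩
    apply δ.injective
    rw [← Equiv.Perm.mul_apply, ← pow_succ']
    have : j - 1 + 1 = j := by omega
    rw [this, hjz]

include h1s hst ht in
lemma cut_eq_off {z : Z} (hz : z ∉ orbIco δ z₀ 0 t) : cutPerm δ z₀ s t z = δ z := by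
  unfold cutPerm
  rw [Equiv.Perm.mul_apply, Equiv.swap_apply_of_ne_of_ne]
  · intro h
    apply hz
    rw [h, mem_orbIco δ z₀ t ht]
    exact ⟨s-1, by omega, by omega, rfl⟩
  · intro h
    apply hz
    rw [h, mem_orbIco δ z₀ t ht]
    exact ⟨t-1, by omega, by omega, rfl⟩

include ht in
lemma pow_off {z : Z} (hz : z ∉ orbIco δ z₀ 0 t) (n : ℕ) : (δ ^ n) z ∉ orbIco δ z₀ 0 t := by
  induction n with
  | zero => simpa using hz
  | succ n ih =>
    intro hc
    apply ih
    rw [pow_succ', Equiv.Perm.mul_apply] at hc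
    exact O_invariant' δ z₀ t ht hc

include h1s hst ht in
lemma cut_pow_off {z : Z} (hz : z ∉ orbIco δ z₀ 0 t) (n : ℕ) :
    ((cutPerm δ z₀ s t) ^ n) z = (δ ^ n) z := by
  induction n with
  | zero => simp
  | succ n ih =>
    rw [pow_succ', pow_succ', Equiv.Perm.mul_apply, Equiv.Perm.mul_apply, ih,
      cut_eq_off δ z₀ s t h1s hst ht (pow_off δ z₀ t ht hz n)]

include h1s hst ht in
lemma minPer_cut_off {z : Z} (hz : z ∉ orbIco δ z₀ 0 t) :
    minimalPeriod (⇑(cutPerm δ z₀ s t)) z = minimalPeriod (⇑δ) z := by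
  refine minPer_congr (mem_pp _ _) fun n => ?_
  rw [isPeriodicPt_perm_iff, isPeriodicPt_perm_iff, cut_pow_off δ z₀ s t h1s hst ht hz]

end Cut
end AuxSofic

namespace AuxSofic
open Finset Function Equiv

variable {Z : Type*} [Fintype Z] [DecidableEq Z]

lemma pm_subtypePerm {p : Z → Prop} [DecidablePred p] (γ : Equiv.Perm Z)
    (hp : ∀ x, p x ↔ p (γ x)) (u : ℕ) :
    pm (γ.subtypePerm (fun x => (hp x).symm)) u
      = (Finset.univ.filter fun z => p z ∧ minimalPeriod (⇑γ) z = u).card := by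
  unfold pm
  refine Finset.card_nbij (fun y => (y : Z)) ?_ ?_ ?_
  · intro y hy
    simp only [Finset.mem_coe, mem_filter, mem_univ, true_and] at hy ⊢
    rw [minPer_subtypePerm γ hp y] at hy
    exact ⟨y.2, hy⟩
  · intro a _ b _ hab
    exact Subtype.ext hab
  · intro z hz
    simp only [Finset.coe_filter, Set.mem_setOf_eq, mem_univ, true_and, Set.mem_image] at hz ⊢
    obtain ⟨hp1, hp2⟩ := hz
    refine ⟨⟨z, hp1⟩, ?_, rfl⟩
    rw [minPer_subtypePerm γ hp ⟨z, hp1⟩]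
    exact hp2

section Cut2

variable (δ : Equiv.Perm Z) (z₀ : Z) (s t : ℕ)
  (h1s : 1 ≤ s) (hst : s ≤ t) (ht : minimalPeriod (⇑δ) z₀ = t)

include h1s hst ht in
lemma cut_D_iff : ∀ z : Z, z ∉ orbIco δ z₀ 0 s ↔ cutPerm δ z₀ s t z ∉ orbIco δ z₀ 0 s := by
  intro z
  rw [not_iff_not]
  constructor
  · intro hz
    rw [mem_orbIco δ z₀ t ht] at hz ⊢
    obtain ⟨j, _, hj, rfl⟩ := hz
    rw [cut_apply δ z₀ s t h1s hst ht (by omega)]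
    rcases eq_or_ne j (s-1) with h | h
    · rw [if_pos h]
      exact ⟨0, le_refl _, by omega, by simp⟩
    · have hj1 : j + 1 < s := by omega
      rw [if_neg h, if_neg (by omega)]
      exact ⟨j+1, by omega, hj1, rfl⟩
  · intro hz
    rw [mem_orbIco δ z₀ t ht] at hz ⊢
    obtain ⟨j, _, hj, hjz⟩ := hz
    rcases Nat.eq_zero_or_pos j with h | h
    · subst h
      refine ⟨s-1, by omega, by omega, ?_⟩
      apply (cutPerm δ z₀ s t).injective
      rw [cut_apply δ z₀ s t h1s hst ht (by omega), if_pos rfl, ← hjz]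
      simp
    · refine ⟨j-1, by omega, by omega, ?_⟩
      apply (cutPerm δ z₀ s t).injective
      rw [cut_apply δ z₀ s t h1s hst ht (show j - 1 < t by omega),
        if_neg (show ¬ (j-1 = s-1) by omega), if_neg (show ¬ (j-1 = t-1) by omega),
        show j - 1 + 1 = j by omega, hjz]

include h1s hst ht in
lemma pm_cut (u : ℕ) (hu : 1 ≤ u) :
    pm ((cutPerm δ z₀ s t).subtypePerm (p := fun y => y ∉ orbIco δ z₀ 0 s) (fun x => (cut_D_iff δ z₀ s t h1s hst ht x).symm)) u
        + (if u = t then t else 0)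
      = pm δ u + (if u = t - s then t - s else 0) := by
  classical
  set cp := cutPerm δ z₀ s t with hcp
  set D := orbIco δ z₀ 0 s with hD
  set O := orbIco δ z₀ 0 t with hO
  have hDO : ∀ z, z ∈ D → z ∈ O := by
    intro z hz
    rw [hD, mem_orbIco δ z₀ t ht] at hz
    rw [hO, mem_orbIco δ z₀ t ht]
    obtain ⟨j, h1, h2, h3⟩ := hz
    exact ⟨j, h1, by omega, h3⟩
  have hOt : ∀ z ∈ O, minimalPeriod (⇑δ) z = t := by
    intro z hz
    rw [hO, mem_orbIco δ z₀ t ht] at hz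
    obtain ⟨j, _, hj, rfl⟩ := hz
    rw [← ht]
    rw [show ((δ ^ j) z₀) = (⇑δ)^[j] z₀ by rw [Equiv.Perm.coe_pow]]
    exact minimalPeriod_apply_iterate (mem_pp δ z₀) j
  -- LHS as a filter over Z
  rw [pm_subtypePerm _ (cut_D_iff δ z₀ s t h1s hst ht)]
  set S := Finset.univ.filter fun z => z ∉ D ∧ minimalPeriod (⇑cp) z = u with hS
  -- split S by O
  have hsplit : S.card = (S.filter (· ∈ O)).card + (S.filter (· ∉ O)).card :=
    (Finset.card_filter_add_card_filter_not (s := S) (p := (· ∈ O))).symm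
  have e1 : S.filter (· ∈ O) = if u = t - s then orbIco δ z₀ s t else ∅ := by
    ext z
    simp only [hS, Finset.mem_filter, Finset.mem_univ, true_and]
    constructor
    · rintro ⟨⟨hzD, hzu⟩, hzO⟩
      rw [hO, mem_orbIco δ z₀ t ht] at hzO
      obtain ⟨j, _, hj, rfl⟩ := hzO
      have hjs : s ≤ j := by
        by_contra hc
        exact hzD (by rw [hD, mem_orbIco δ z₀ t ht]; exact ⟨j, by omega, by omega, rfl⟩)
      have := minPer_cut_R δ z₀ s t h1s hst ht hjs hj
      rw [← hcp] at this
      rw [this] at hzu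
      rw [if_pos hzu.symm]
      rw [mem_orbIco δ z₀ t ht]
      exact ⟨j, hjs, hj, rfl⟩
    · intro hz
      by_cases hu2 : u = t - s
      · rw [if_pos hu2] at hz
        rw [mem_orbIco δ z₀ t ht] at hz
        obtain ⟨j, hj1, hj2, rfl⟩ := hz
        have hm := minPer_cut_R δ z₀ s t h1s hst ht hj1 hj2
        rw [← hcp] at hm
        refine ⟨⟨?_, by rw [hm, hu2]⟩, ?_⟩
        · intro hc
          rw [hD, mem_orbIco δ z₀ t ht] at hc
          obtain ⟨k, _, hk, hkj⟩ := hc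
          have := orb_inj δ z₀ t ht (by omega) (by omega) hkj
          omega
        · rw [hO, mem_orbIco δ z₀ t ht]
          exact ⟨j, by omega, by omega, rfl⟩
      · rw [if_neg hu2] at hz
        simp at hz
  have e2 : S.filter (· ∉ O) = Finset.univ.filter fun z => z ∉ O ∧ minimalPeriod (⇑δ) z = u := by
    ext z
    simp only [hS, Finset.mem_filter, Finset.mem_univ, true_and]
    constructor
    · rintro ⟨⟨hzD, hzu⟩, hzO⟩
      refine ⟨hzO, ?_⟩
      rw [← hzu, hcp]
      exact (minPer_cut_off δ z₀ s t h1s hst ht hzO).symm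
    · rintro ⟨hzO, hzu⟩
      refine ⟨⟨fun hc => hzO (hDO z hc), ?_⟩, hzO⟩
      rw [hcp, minPer_cut_off δ z₀ s t h1s hst ht hzO, hzu]
  have e3 : (Finset.univ.filter fun z => z ∉ O ∧ minimalPeriod (⇑δ) z = u).card
      + (if u = t then t else 0) = pm δ u := by
    have h4 : (Finset.univ.filter fun z => z ∈ O ∧ minimalPeriod (⇑δ) z = u).card
        = if u = t then t else 0 := by
      rcases eq_or_ne u t with h | h
      · rw [if_pos h]
        have : (Finset.univ.filter fun z => z ∈ O ∧ minimalPeriod (⇑δ) z = u) = O := by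
          ext z
          simp only [Finset.mem_filter, Finset.mem_univ, true_and]
          exact ⟨fun hz => hz.1, fun hz => ⟨hz, by rw [hOt z hz, h]⟩⟩
        rw [this, hO, card_orbIco δ z₀ t ht (le_refl t)]
        omega
      · rw [if_neg h]
        rw [Finset.card_eq_zero]
        ext z
        simp only [Finset.mem_filter, Finset.mem_univ, true_and, Finset.notMem_empty,
          iff_false, not_and]
        intro hz hc
        exact h (by rw [← hc, hOt z hz])
    have h5 := Finset.card_filter_add_card_filter_not
      (s := Finset.univ.filter fun z => minimalPeriod (⇑δ) z = u) (p := (· ∈ O))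
    have h6 : ((Finset.univ.filter fun z => minimalPeriod (⇑δ) z = u).filter (· ∈ O))
        = Finset.univ.filter fun z => z ∈ O ∧ minimalPeriod (⇑δ) z = u := by
      rw [Finset.filter_filter]
      ext z
      simp only [Finset.mem_filter, Finset.mem_univ, true_and]
      tauto
    have h7 : ((Finset.univ.filter fun z => minimalPeriod (⇑δ) z = u).filter (· ∉ O))
        = Finset.univ.filter fun z => z ∉ O ∧ minimalPeriod (⇑δ) z = u := by
      rw [Finset.filter_filter]
      ext z
      simp only [Finset.mem_filter, Finset.mem_univ, true_and]
      tauto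
    rw [h6, h7] at h5
    unfold pm
    omega
  have e4 : (if u = t - s then orbIco δ z₀ s t else ∅).card
      = if u = t - s then t - s else 0 := by
    rcases eq_or_ne u (t-s) with h | h
    · rw [if_pos h, if_pos h, card_orbIco δ z₀ t ht (le_refl t)]
    · rw [if_neg h, if_neg h, Finset.card_empty]
  rw [hsplit, e1, e2, e4]
  omega
end Cut2
end AuxSofic

namespace AuxSofic
open Finset Function Equiv

variable {Y : Type*} [Fintype Y] [DecidableEq Y] {Z : Type*} [Fintype Z] [DecidableEq Z]

lemma cutPerm_self (γ : Equiv.Perm Y) (y₀ : Y) (s : ℕ) : cutPerm γ y₀ s s = γ := by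
  ext y
  simp [cutPerm, Equiv.swap_self]

lemma extend (γ : Equiv.Perm Y) (δ : Equiv.Perm Z) (y₀ : Y) (z₀ : Z) (s t : ℕ)
    (hs : minimalPeriod (⇑γ) y₀ = s) (ht : minimalPeriod (⇑δ) z₀ = t)
    (h1s : 1 ≤ s) (hst : s ≤ t) (hcard : Fintype.card Y = Fintype.card Z)
    (hCiff : ∀ y, y ∉ orbIco γ y₀ 0 s ↔ γ y ∉ orbIco γ y₀ 0 s)
    (σ' : {y // y ∉ orbIco γ y₀ 0 s} ≃ {z // z ∉ orbIco δ z₀ 0 s}) :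
    ∃ σ : Y ≃ Z, (errSet σ γ δ).card ≤
      (errSet σ' (γ.subtypePerm (p := fun y => y ∉ orbIco γ y₀ 0 s) (fun x => (hCiff x).symm))
        ((cutPerm δ z₀ s t).subtypePerm (p := fun y => y ∉ orbIco δ z₀ 0 s) (fun x => (cut_D_iff δ z₀ s t h1s hst ht x).symm))).card
      + (if s = t then 0 else 2) := by
  classical
  set γ' := γ.subtypePerm (p := fun y => y ∉ orbIco γ y₀ 0 s) (fun x => (hCiff x).symm) with hγ'
  set δ' := (cutPerm δ z₀ s t).subtypePerm (p := fun y => y ∉ orbIco δ z₀ 0 s) (fun x => (cut_D_iff δ z₀ s t h1s hst ht x).symm) with hδ'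
  have hex : ∀ {y}, y ∈ orbIco γ y₀ 0 s → ∃ j, j < s ∧ (γ^j) y₀ = y := by
    intro y hy
    rw [mem_orbIco γ y₀ s hs] at hy
    obtain ⟨j, _, h2, h3⟩ := hy
    exact ⟨j, h2, h3⟩
  have uniqY : ∀ {j k}, j < s → k < s → (γ^j) y₀ = (γ^k) y₀ → j = k := by
    intro j k hj hk h
    exact orb_inj γ y₀ s hs hj hk h
  set f : Y → Z := fun y =>
    if h : y ∈ orbIco γ y₀ 0 s then (δ ^ (Nat.find (hex h))) z₀ else ((σ' ⟨y, h⟩) : Z)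
    with hf
  have hfC : ∀ {j} (hj : j < s), f ((γ^j) y₀) = (δ^j) z₀ := by
    intro j hj
    have hmem : (γ^j) y₀ ∈ orbIco γ y₀ 0 s := by
      rw [mem_orbIco γ y₀ s hs]; exact ⟨j, by omega, hj, rfl⟩
    rw [hf]
    simp only [dif_pos hmem]
    obtain ⟨h1, h2⟩ := Nat.find_spec (hex hmem)
    rw [uniqY h1 hj h2]
  have hfN : ∀ {y} (h : y ∉ orbIco γ y₀ 0 s), f y = ((σ' ⟨y, h⟩) : Z) := by
    intro y h
    rw [hf]
    simp only [dif_neg h]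
  have hinj : Function.Injective f := by
    intro y1 y2 heq
    by_cases h1 : y1 ∈ orbIco γ y₀ 0 s <;> by_cases h2 : y2 ∈ orbIco γ y₀ 0 s
    · obtain ⟨hj1, hy1⟩ := Nat.find_spec (hex h1)
      obtain ⟨hj2, hy2⟩ := Nat.find_spec (hex h2)
      rw [hf] at heq
      simp only [dif_pos h1, dif_pos h2] at heq
      have := orb_inj δ z₀ t ht (by omega) (by omega) heq
      rw [← hy1, ← hy2, this]
    · exfalso
      rw [hf] at heq
      simp only [dif_pos h1, dif_neg h2] at heq
      refine (σ' ⟨y2, h2⟩).2 ?_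
      rw [← heq, mem_orbIco δ z₀ t ht]
      exact ⟨Nat.find (hex h1), by omega, (Nat.find_spec (hex h1)).1, rfl⟩
    · exfalso
      rw [hf] at heq
      simp only [dif_neg h1, dif_pos h2] at heq
      refine (σ' ⟨y1, h1⟩).2 ?_
      rw [heq, mem_orbIco δ z₀ t ht]
      exact ⟨Nat.find (hex h2), by omega, (Nat.find_spec (hex h2)).1, rfl⟩
    · rw [hf] at heq
      simp only [dif_neg h1, dif_neg h2] at heq
      have := σ'.injective (Subtype.ext heq)
      rw [Subtype.ext_iff] at this
      exact this
  set σ : Y ≃ Z := Equiv.ofBijective f ((Fintype.bijective_iff_injective_and_card f).2 ⟨hinj, hcard⟩)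
    with hσdef
  have hσ : ∀ y, σ y = f y := fun y => rfl
  set bad1 : Y := (γ ^ (s-1)) y₀ with hbad1
  have hDb : s < t → (δ ^ (t-1)) z₀ ∉ orbIco δ z₀ 0 s := by
    intro hlt hc
    rw [mem_orbIco δ z₀ t ht] at hc
    obtain ⟨k, _, hk, hkz⟩ := hc
    have := orb_inj δ z₀ t ht (by omega) (by omega) hkz
    omega
  set bad2 : Y := if h : s < t then ((σ'.symm ⟨(δ^(t-1)) z₀, hDb h⟩ : {y // y ∉ orbIco γ y₀ 0 s}) : Y)
    else y₀ with hbad2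
  have hmain : ∀ y ∈ errSet σ γ δ,
      (y ∈ (errSet σ' γ' δ').image Subtype.val) ∨ (s ≠ t ∧ (y = bad1 ∨ y = bad2)) := by
    intro y hy
    simp only [errSet, Finset.mem_filter, Finset.mem_univ, true_and] at hy
    by_cases h1 : y ∈ orbIco γ y₀ 0 s
    · -- y in the matched partial orbit
      obtain ⟨hjs, hjy⟩ := Nat.find_spec (hex h1)
      set j := Nat.find (hex h1) with hj
      right
      by_cases hlast : j + 1 < s
      · exfalso
        apply hy
        have hg : γ y = (γ^(j+1)) y₀ := by
          rw [← hjy, ← Equiv.Perm.mul_apply, ← pow_succ']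
        rw [hσ, hσ, hg, hfC hlast, ← hjy, hfC hjs, ← Equiv.Perm.mul_apply, ← pow_succ']
      · have hjeq : j = s - 1 := by omega
        have hybad : y = bad1 := by rw [hbad1, ← hjeq, hjy]
        refine ⟨?_, Or.inl hybad⟩
        intro hset
        apply hy
        have hg : γ y = y₀ := by
          rw [← hjy, ← Equiv.Perm.mul_apply, ← pow_succ', hjeq,
            show s - 1 + 1 = s by omega]
          exact pow_t_z₀ γ y₀ s hs
        have h0 : f ((γ^0) y₀) = (δ^0) z₀ := hfC (by omega)
        simp only [pow_zero, Equiv.Perm.one_apply] at h0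
        rw [hσ, hσ, hg, h0, ← hjy, hfC hjs, ← Equiv.Perm.mul_apply, ← pow_succ', hjeq,
          show s - 1 + 1 = s by omega, hset]
        exact (pow_t_z₀ δ z₀ t ht).symm
    · -- y outside
      have h2 : γ y ∉ orbIco γ y₀ 0 s := (hCiff y).1 h1
      have hfy : σ y = ((σ' ⟨y, h1⟩) : Z) := by rw [hσ]; exact hfN h1
      have hfgy : σ (γ y) = ((σ' (γ' ⟨y, h1⟩)) : Z) := by
        rw [hσ, hfN h2]
        congr 1
      set v : Z := ((σ' ⟨y, h1⟩) : Z) with hv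
      by_cases hvb : v = (δ^(t-1)) z₀
      · right
        have hsnet : s ≠ t := by
          intro hset
          apply (σ' ⟨y, h1⟩).2
          rw [← hv, hvb, mem_orbIco δ z₀ t ht]
          exact ⟨t-1, by omega, by omega, rfl⟩
        refine ⟨hsnet, Or.inr ?_⟩
        have hlt2 : s < t := by omega
        have h4 : (⟨y, h1⟩ : {y // y ∉ orbIco γ y₀ 0 s})
            = σ'.symm ⟨(δ^(t-1)) z₀, hDb hlt2⟩ := by
          apply σ'.injective
          rw [Equiv.apply_symm_apply]
          exact Subtype.ext hvb
        rw [hbad2, dif_pos hlt2, ← h4]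
      · left
        have hvD : v ∉ orbIco δ z₀ 0 s := (σ' ⟨y, h1⟩).2
        have hcut : cutPerm δ z₀ s t v = δ v := by
          unfold cutPerm
          rw [Equiv.Perm.mul_apply, Equiv.swap_apply_of_ne_of_ne]
          · intro hc
            apply hvD
            rw [hc, mem_orbIco δ z₀ t ht]
            exact ⟨s-1, by omega, by omega, rfl⟩
          · exact hvb
        have hδv : ((δ' (σ' ⟨y, h1⟩)) : Z) = δ v := by
          rw [hδ']
          simp only [Equiv.Perm.subtypePerm_apply]
          exact hcut
        have herr : σ' (γ' ⟨y, h1⟩) ≠ δ' (σ' ⟨y, h1⟩) := by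
          intro hc
          apply hy
          rw [hfgy, hfy, ← hδv]
          exact congrArg Subtype.val hc
        refine Finset.mem_image.mpr ⟨⟨y, h1⟩, ?_, rfl⟩
        simp only [errSet, Finset.mem_filter, Finset.mem_univ, true_and]
        exact herr
  refine ⟨σ, ?_⟩
  have himg : ((errSet σ' γ' δ').image Subtype.val).card = (errSet σ' γ' δ').card :=
    Finset.card_image_of_injective _ Subtype.val_injective
  rcases eq_or_ne s t with hset | hsnet
  · rw [if_pos hset]
    have hsub : errSet σ γ δ ⊆ (errSet σ' γ' δ').image Subtype.val := by
      intro y hy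
      rcases hmain y hy with h | h
      · exact h
      · exact absurd hset h.1
    calc (errSet σ γ δ).card ≤ _ := Finset.card_le_card hsub
      _ = (errSet σ' γ' δ').card + 0 := by rw [himg, Nat.add_zero]
  · rw [if_neg hsnet]
    have hsub : errSet σ γ δ ⊆ insert bad1 (insert bad2 ((errSet σ' γ' δ').image Subtype.val)) := by
      intro y hy
      rcases hmain y hy with h | h
      · exact Finset.mem_insert_of_mem (Finset.mem_insert_of_mem h)
      · rcases h.2 with h2 | h2
        · rw [h2]; exact Finset.mem_insert_self _ _
        · rw [h2]; exact Finset.mem_insert_of_mem (Finset.mem_insert_self _ _)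
    calc (errSet σ γ δ).card
        ≤ (insert bad1 (insert bad2 ((errSet σ' γ' δ').image Subtype.val))).card :=
          Finset.card_le_card hsub
      _ ≤ (insert bad2 ((errSet σ' γ' δ').image Subtype.val)).card + 1 :=
          Finset.card_insert_le _ _
      _ ≤ ((errSet σ' γ' δ').image Subtype.val).card + 1 + 1 := by
          have := Finset.card_insert_le bad2 ((errSet σ' γ' δ').image Subtype.val)
          omega
      _ = (errSet σ' γ' δ').card + 2 := by rw [himg]
end AuxSofic

namespace AuxSofic
open Finset Function Equiv

variable {Y : Type*} [Fintype Y] [DecidableEq Y] {Z : Type*} [Fintype Z] [DecidableEq Z]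

noncomputable def Psi (M : ℕ) (γ : Equiv.Perm Y) (δ : Equiv.Perm Z) : ℝ :=
  ∑ u ∈ Finset.range M, |(pm γ u : ℝ)/u - (pm δ u : ℝ)/u|

lemma Psi_nonneg (M : ℕ) (γ : Equiv.Perm Y) (δ : Equiv.Perm Z) : 0 ≤ Psi M γ δ :=
  Finset.sum_nonneg fun _ _ => abs_nonneg _

lemma Psi_symm (M : ℕ) (γ : Equiv.Perm Y) (δ : Equiv.Perm Z) : Psi M δ γ = Psi M γ δ := by
  unfold Psi
  refine Finset.sum_congr rfl fun u _ => ?_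
  rw [abs_sub_comm]

lemma term_bound_A {s u : ℕ} {a b a' b' : ℝ}
    (ha' : a' = a - (if u = s then (s:ℝ) else 0))
    (hb' : b' = b - (if u = s then (s:ℝ) else 0)) :
    |a'/u - b'/u| = |a/u - b/u| := by
  rw [ha', hb']
  congr 1
  ring

lemma term_bound_B {s t u : ℕ} {a b a' b' : ℝ}
    (h1s : 1 ≤ s) (hlt : s < t) (hu : 1 ≤ u)
    (ha' : a' = a - (if u = s then (s:ℝ) else 0))
    (hb' : b' + (if u = t then (t:ℝ) else 0) = b + (if u = t - s then ((t:ℝ) - s) else 0))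
    (hbs : u = s → b = 0 ∧ (s:ℝ) ≤ a)
    (hat : u = t → a = 0 ∧ (t:ℝ) ≤ b) :
    |a'/u - b'/u| ≤ |a/u - b/u|
      + ((if u = t - s then (1:ℝ) else 0) - (if u = s then 1 else 0)
        - (if u = t then 1 else 0)) := by
  have hu0 : (0:ℝ) < u := by positivity
  have hu0' : (u:ℝ) ≠ 0 := ne_of_gt hu0
  have habs : ∀ X Y : ℝ, |X/(u:ℝ) - Y/(u:ℝ)| = |X - Y|/(u:ℝ) := by
    intro X Y
    rw [div_sub_div_same, abs_div, abs_of_pos hu0]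
  rw [habs, habs, div_add' _ _ _ hu0', div_le_div_iff_of_pos_right hu0]
  by_cases hus : u = s <;> by_cases hut : u = t <;> by_cases huts : u = t - s
  · omega
  · omega
  · -- u = s = t - s
    obtain ⟨hb0, has⟩ := hbs hus
    rw [if_pos hus] at ha'
    rw [if_neg hut, if_pos huts] at hb'
    rw [if_pos huts, if_pos hus, if_neg hut]
    have hcus : (u:ℝ) = s := by rw [hus]
    have hts : (t:ℝ) - s = s := by
      have h2 : t = 2 * s := by omega
      rw [h2]
      push_cast
      ring
    have hbval : b' = (s:ℝ) := by linarith
    rw [ha', hbval, hb0]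
    rcases abs_cases (a - (s:ℝ) - (s:ℝ)) with ⟨h1, _⟩ | ⟨h1, _⟩ <;>
      rcases abs_cases (a - (0:ℝ)) with ⟨h2, _⟩ | ⟨h2, _⟩ <;> linarith
  · -- u = s only
    obtain ⟨hb0, has⟩ := hbs hus
    rw [if_pos hus] at ha'
    rw [if_neg hut, if_neg huts] at hb'
    rw [if_neg huts, if_pos hus, if_neg hut]
    have hcus : (u:ℝ) = s := by rw [hus]
    have hbval : b' = b := by linarith
    rw [ha', hbval, hb0]
    rcases abs_cases (a - (s:ℝ) - (0:ℝ)) with ⟨h1, _⟩ | ⟨h1, _⟩ <;>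
      rcases abs_cases (a - (0:ℝ)) with ⟨h2, _⟩ | ⟨h2, _⟩ <;> linarith
  · omega
  · -- u = t only
    obtain ⟨ha0, hbt⟩ := hat hut
    rw [if_neg hus] at ha'
    rw [if_pos hut, if_neg huts] at hb'
    rw [if_neg huts, if_neg hus, if_pos hut]
    have hcut2 : (u:ℝ) = t := by rw [hut]
    have haval : a' = 0 := by linarith
    have hbval : b' = b - (t:ℝ) := by linarith
    rw [haval, hbval, ha0]
    rcases abs_cases ((0:ℝ) - (b - (t:ℝ))) with ⟨h1, _⟩ | ⟨h1, _⟩ <;>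
      rcases abs_cases ((0:ℝ) - b) with ⟨h2, _⟩ | ⟨h2, _⟩ <;> linarith
  · -- u = t - s only
    rw [if_neg hus] at ha'
    rw [if_neg hut, if_pos huts] at hb'
    rw [if_pos huts, if_neg hus, if_neg hut]
    have hw : (t:ℝ) - s = (u:ℝ) := by rw [huts, Nat.cast_sub hlt.le]
    have haval : a' = a := by linarith
    have hbval : b' = b + (u:ℝ) := by linarith
    rw [haval, hbval]
    rcases abs_cases (a - (b + (u:ℝ))) with ⟨h1, _⟩ | ⟨h1, _⟩ <;>
      rcases abs_cases (a - b) with ⟨h2, _⟩ | ⟨h2, _⟩ <;> linarith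
  · -- generic
    rw [if_neg hus] at ha'
    rw [if_neg hut, if_neg huts] at hb'
    rw [if_neg huts, if_neg hus, if_neg hut]
    have haval : a' = a := by linarith
    have hbval : b' = b := by linarith
    rw [haval, hbval]
    linarith [abs_nonneg (a - b)]

lemma subtypePerm_cut_self (γ : Equiv.Perm Y) (y₀ : Y) (s : ℕ)
    (hs : minimalPeriod (⇑γ) y₀ = s) (h1s : 1 ≤ s)
    (hCiff : ∀ y, y ∉ orbIco γ y₀ 0 s ↔ γ y ∉ orbIco γ y₀ 0 s) :
    γ.subtypePerm (p := fun y => y ∉ orbIco γ y₀ 0 s) (fun x => (hCiff x).symm)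
      = (cutPerm γ y₀ s s).subtypePerm (p := fun y => y ∉ orbIco γ y₀ 0 s) (fun x => (cut_D_iff γ y₀ s s h1s le_rfl hs x).symm) := by
  refine Equiv.ext fun y => Subtype.ext ?_
  simp only [Equiv.Perm.subtypePerm_apply]
  rw [cutPerm_self]

end AuxSofic

namespace AuxSofic
open Finset Function Equiv

lemma lemFstep (M n : ℕ)
    (IH : ∀ m : ℕ, m < n → ∀ {Y' Z' : Type} [Fintype Y'] [DecidableEq Y'] [Fintype Z']
      [DecidableEq Z'] (γ' : Equiv.Perm Y') (δ' : Equiv.Perm Z'),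
      Fintype.card Y' = m → Fintype.card Z' = m → m < M →
      ∃ σ : Y' ≃ Z', ((errSet σ γ' δ').card : ℝ) ≤ 2 * Psi M γ' δ')
    {Y Z : Type} [Fintype Y] [DecidableEq Y] [Fintype Z] [DecidableEq Z]
    (γ : Equiv.Perm Y) (δ : Equiv.Perm Z) (y₀ : Y) (z₀ : Z)
    (hY : Fintype.card Y = n) (hZ : Fintype.card Z = n) (hM : n < M)
    (hst : minimalPeriod (⇑γ) y₀ ≤ minimalPeriod (⇑δ) z₀)
    (hcase : minimalPeriod (⇑γ) y₀ = minimalPeriod (⇑δ) z₀ ∨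
      (pm δ (minimalPeriod (⇑γ) y₀) = 0 ∧ pm γ (minimalPeriod (⇑δ) z₀) = 0)) :
    ∃ σ : Y ≃ Z, ((errSet σ γ δ).card : ℝ) ≤ 2 * Psi M γ δ := by
  classical
  set s := minimalPeriod (⇑γ) y₀ with hsdef
  set t := minimalPeriod (⇑δ) z₀ with htdef
  have hs : minimalPeriod (⇑γ) y₀ = s := rfl
  have ht : minimalPeriod (⇑δ) z₀ = t := rfl
  have h1s : 1 ≤ s := minPer_pos γ y₀
  have h1t : 1 ≤ t := minPer_pos δ z₀
  have hCiff : ∀ y, y ∉ orbIco γ y₀ 0 s ↔ γ y ∉ orbIco γ y₀ 0 s := by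
    have h2 := cut_D_iff γ y₀ s s h1s le_rfl hs
    intro y
    rw [h2 y, cutPerm_self]
  have hcardC : (orbIco γ y₀ 0 s).card = s := by
    rw [card_orbIco γ y₀ s hs le_rfl, Nat.sub_zero]
  have hcardD : (orbIco δ z₀ 0 s).card = s := by
    rw [card_orbIco δ z₀ t ht hst, Nat.sub_zero]
  have hsn : s ≤ n := by
    rw [← hY, ← hcardC]
    exact Finset.card_le_univ _
  have htn : t ≤ n := by
    rw [← hZ, ← ht]
    exact minPer_le_card δ z₀
  have hcY' : Fintype.card {y // y ∉ orbIco γ y₀ 0 s} = n - s := by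
    rw [Fintype.card_subtype_compl, Fintype.card_coe, hY, hcardC]
  have hcZ' : Fintype.card {z // z ∉ orbIco δ z₀ 0 s} = n - s := by
    rw [Fintype.card_subtype_compl, Fintype.card_coe, hZ, hcardD]
  set γ' := γ.subtypePerm (p := fun y => y ∉ orbIco γ y₀ 0 s) (fun x => (hCiff x).symm) with hγ'def
  set δ' := (cutPerm δ z₀ s t).subtypePerm (p := fun y => y ∉ orbIco δ z₀ 0 s) (fun x => (cut_D_iff δ z₀ s t h1s hst ht x).symm) with hδ'def
  obtain ⟨σ', hσ'⟩ := IH (n - s) (by omega) γ' δ' hcY' hcZ' (by omega)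
  obtain ⟨σ, hσb⟩ := extend γ δ y₀ z₀ s t hs ht h1s hst (by rw [hY, hZ]) hCiff σ'
  rw [← hγ'def, ← hδ'def] at hσb
  have hpmγ : ∀ u, 1 ≤ u → (pm γ' u : ℝ) = (pm γ u : ℝ) - (if u = s then (s:ℝ) else 0) := by
    intro u hu
    have h := pm_cut γ y₀ s s h1s le_rfl hs u hu
    rw [← subtypePerm_cut_self γ y₀ s hs h1s hCiff] at h
    rw [if_neg (show ¬ u = s - s by omega)] at h
    rcases eq_or_ne u s with h2 | h2
    · rw [if_pos h2] at h ⊢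
      have h3 : (pm γ' u : ℝ) + s = pm γ u := by exact_mod_cast h
      linarith
    · rw [if_neg h2] at h ⊢
      have h3 : (pm γ' u : ℝ) + 0 = pm γ u := by exact_mod_cast h
      linarith
  have hpmδ : ∀ u, 1 ≤ u → (pm δ' u : ℝ) + (if u = t then (t:ℝ) else 0)
      = (pm δ u : ℝ) + (if u = t - s then ((t:ℝ) - s) else 0) := by
    intro u hu
    have h := pm_cut δ z₀ s t h1s hst ht u hu
    rcases eq_or_ne u t with h1 | h1 <;> rcases eq_or_ne u (t - s) with h2 | h2
    · omega
    · rw [if_pos h1] at h ⊢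
      rw [if_neg h2] at h ⊢
      exact_mod_cast h
    · rw [if_neg h1] at h ⊢
      rw [if_pos h2] at h ⊢
      rw [← Nat.cast_sub hst]
      exact_mod_cast h
    · rw [if_neg h1] at h ⊢
      rw [if_neg h2] at h ⊢
      exact_mod_cast h
  rcases hcase with hA | hB
  · -- equal periods: no loss
    have hPsi : Psi M γ' δ' = Psi M γ δ := by
      unfold Psi
      refine Finset.sum_congr rfl fun u _ => ?_
      rcases Nat.eq_zero_or_pos u with h0 | h0
      · subst h0
        simp
      · refine term_bound_A (s := s) (hpmγ u h0) ?_
        have h4 := hpmδ u h0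
        rw [← hA] at h4
        rw [if_neg (show ¬ u = s - s by omega)] at h4
        rcases eq_or_ne u s with h2 | h2
        · rw [if_pos h2] at h4 ⊢
          linarith
        · rw [if_neg h2] at h4 ⊢
          linarith
    refine ⟨σ, ?_⟩
    rw [if_pos hA] at hσb
    have hcast : ((errSet σ γ δ).card : ℝ) ≤ ((errSet σ' γ' δ').card : ℝ) := by
      exact_mod_cast (by omega : (errSet σ γ δ).card ≤ (errSet σ' γ' δ').card)
    rw [hPsi] at hσ'
    linarith
  · -- disjoint periods: lose one unit of Psi
    have hsnet : s ≠ t := by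
      intro h
      have h2 := le_pm_of_witness δ ht
      rw [← h] at h2
      rw [hB.1] at h2
      omega
    have hlt : s < t := lt_of_le_of_ne hst hsnet
    have hPsiB : Psi M γ' δ' ≤ Psi M γ δ - 1 := by
      have hterm : ∀ u ∈ Finset.range M,
          |(pm γ' u : ℝ)/u - (pm δ' u : ℝ)/u| ≤ |(pm γ u : ℝ)/u - (pm δ u : ℝ)/u|
            + ((if u = t - s then (1:ℝ) else 0) - (if u = s then 1 else 0)
              - (if u = t then 1 else 0)) := by
        intro u _
        rcases Nat.eq_zero_or_pos u with h0 | h0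
        · subst h0
          rw [if_neg (show ¬ (0:ℕ) = t - s by omega), if_neg (show ¬ (0:ℕ) = s by omega),
            if_neg (show ¬ (0:ℕ) = t by omega)]
          simp
        · refine term_bound_B h1s hlt h0 (hpmγ u h0) (hpmδ u h0) ?_ ?_
          · intro hus
            subst hus
            refine ⟨by exact_mod_cast congrArg (Nat.cast (R := ℝ)) hB.1, ?_⟩
            exact_mod_cast le_pm_of_witness γ hs
          · intro hut
            subst hut
            refine ⟨by exact_mod_cast congrArg (Nat.cast (R := ℝ)) hB.2, ?_⟩
            exact_mod_cast le_pm_of_witness δ ht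
      have hcsum : ∑ u ∈ Finset.range M,
          ((if u = t - s then (1:ℝ) else 0) - (if u = s then 1 else 0)
            - (if u = t then 1 else 0)) = -1 := by
        rw [Finset.sum_sub_distrib, Finset.sum_sub_distrib]
        rw [Finset.sum_ite_eq' (Finset.range M) (t - s) (fun _ => (1:ℝ)),
          Finset.sum_ite_eq' (Finset.range M) s (fun _ => (1:ℝ)),
          Finset.sum_ite_eq' (Finset.range M) t (fun _ => (1:ℝ))]
        rw [if_pos (Finset.mem_range.mpr (by omega)), if_pos (Finset.mem_range.mpr (by omega)),
          if_pos (Finset.mem_range.mpr (by omega))]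
        norm_num
      calc Psi M γ' δ' ≤ ∑ u ∈ Finset.range M,
            (|(pm γ u : ℝ)/u - (pm δ u : ℝ)/u|
              + ((if u = t - s then (1:ℝ) else 0) - (if u = s then 1 else 0)
                - (if u = t then 1 else 0))) := Finset.sum_le_sum hterm
        _ = Psi M γ δ + ∑ u ∈ Finset.range M,
            ((if u = t - s then (1:ℝ) else 0) - (if u = s then 1 else 0)
              - (if u = t then 1 else 0)) := by
            rw [Finset.sum_add_distrib]
            rfl
        _ = Psi M γ δ - 1 := by rw [hcsum]; ring
    refine ⟨σ, ?_⟩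
    rw [if_neg hsnet] at hσb
    have hcast : ((errSet σ γ δ).card : ℝ) ≤ ((errSet σ' γ' δ').card : ℝ) + 2 := by
      exact_mod_cast hσb
    linarith

lemma lemF (M n : ℕ) : ∀ {Y Z : Type} [Fintype Y] [DecidableEq Y] [Fintype Z] [DecidableEq Z]
    (γ : Equiv.Perm Y) (δ : Equiv.Perm Z), Fintype.card Y = n → Fintype.card Z = n → n < M →
    ∃ σ : Y ≃ Z, ((errSet σ γ δ).card : ℝ) ≤ 2 * Psi M γ δ := by
  induction n using Nat.strong_induction_on with
  | _ n IH =>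
    intro Y Z _ _ _ _ γ δ hY hZ hM
    rcases Nat.eq_zero_or_pos n with h0 | h0
    · subst h0
      have hY0 : IsEmpty Y := Fintype.card_eq_zero_iff.mp hY
      have hZ0 : IsEmpty Z := Fintype.card_eq_zero_iff.mp hZ
      refine ⟨Equiv.equivOfIsEmpty Y Z, ?_⟩
      have he : (errSet (Equiv.equivOfIsEmpty Y Z) γ δ).card = 0 := by
        rw [Finset.card_eq_zero]
        exact Finset.eq_empty_of_isEmpty _
      rw [he]
      have := Psi_nonneg M γ δ
      push_cast
      linarith
    · have hne : Nonempty Y := Fintype.card_pos_iff.mp (by omega)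
      have hneZ : Nonempty Z := Fintype.card_pos_iff.mp (by omega)
      by_cases hAB : ∃ (y : Y) (z : Z), minimalPeriod (⇑γ) y = minimalPeriod (⇑δ) z
      · obtain ⟨y₀, z₀, h⟩ := hAB
        exact lemFstep M n (fun m hm => IH m hm) γ δ y₀ z₀ hY hZ hM (le_of_eq h) (Or.inl h)
      · obtain ⟨y₀⟩ := hne
        obtain ⟨z₀⟩ := hneZ
        push_neg at hAB
        have hpmδ0 : pm δ (minimalPeriod (⇑γ) y₀) = 0 := by
          by_contra hc
          obtain ⟨z, hz⟩ := pm_pos_witness δ (Nat.pos_of_ne_zero hc)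
          exact hAB y₀ z hz.symm
        have hpmγ0 : pm γ (minimalPeriod (⇑δ) z₀) = 0 := by
          by_contra hc
          obtain ⟨y, hy⟩ := pm_pos_witness γ (Nat.pos_of_ne_zero hc)
          exact hAB y z₀ hy
        rcases le_or_gt (minimalPeriod (⇑γ) y₀) (minimalPeriod (⇑δ) z₀) with hle | hlt
        · exact lemFstep M n (fun m hm => IH m hm) γ δ y₀ z₀ hY hZ hM hle
            (Or.inr ⟨hpmδ0, hpmγ0⟩)
        · obtain ⟨σ0, hσ0⟩ := lemFstep M n (fun m hm => IH m hm) δ γ z₀ y₀ hZ hY hM hlt.le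
            (Or.inr ⟨hpmγ0, hpmδ0⟩)
          refine ⟨σ0.symm, ?_⟩
          have h2 := errSet_card_symm σ0 δ γ
          rw [h2]
          rw [← Psi_symm]
          exact hσ0
end AuxSofic

namespace AuxSofic
open Finset Function Equiv Filter

variable {X : Type*} [Fintype X] [DecidableEq X]

lemma fixCount_filter (γ₁ δ : Equiv.Perm X) :
    fixCount (γ₁ * δ⁻¹) + (Finset.univ.filter fun x => γ₁ x ≠ δ x).card = Fintype.card X := by
  have h1 : fixCount (γ₁ * δ⁻¹) = (Finset.univ.filter fun x => γ₁ x = δ x).card := by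
    unfold fixCount
    refine Finset.card_nbij (fun x => δ⁻¹ x) ?_ ?_ ?_
    · intro x hx
      simp only [Finset.mem_coe, mem_filter, mem_univ, true_and, Set.mem_setOf_eq, Equiv.Perm.mul_apply] at hx ⊢
      replace hx : γ₁ (δ⁻¹ x) = x := (Finset.mem_filter.mp hx).2
      rw [hx]
      simp
    · intro a _ b _ hab
      exact δ⁻¹.injective hab
    · intro y hy
      simp only [Finset.coe_filter, Set.mem_setOf_eq, mem_univ, true_and,
        Set.mem_image, Equiv.Perm.mul_apply] at hy ⊢
      refine ⟨δ y, ?_, by simp⟩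
      refine Finset.mem_filter.mpr ⟨Finset.mem_univ _, ?_⟩
      show γ₁ (δ⁻¹ (δ y)) = δ y
      rw [show δ⁻¹ (δ y) = y by simp]
      rw [hy]
  rw [h1]
  have h2 := Finset.card_filter_add_card_filter_not
    (s := (Finset.univ : Finset X)) (p := fun x => γ₁ x = δ x)
  simp only [Finset.card_univ, ne_eq] at h2 ⊢
  omega

lemma pm_diff_le (γ₁ δ : Equiv.Perm X) (u : ℕ) :
    |(pm γ₁ u : ℝ) - (pm δ u : ℝ)|
      ≤ (u : ℝ) * ((Finset.univ.filter fun x => γ₁ x ≠ δ x).card : ℝ) := by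
  have h1 := pm_le_pm_add γ₁ δ u
  have h2 := pm_le_pm_add δ γ₁ u
  have h3 : (Finset.univ.filter fun x => δ x ≠ γ₁ x) = (Finset.univ.filter fun x => γ₁ x ≠ δ x) := by
    ext x
    simp [ne_comm]
  rw [h3] at h2
  have c1 : (pm γ₁ u : ℝ) ≤ (pm δ u : ℝ)
      + (u:ℝ) * ((Finset.univ.filter fun x => γ₁ x ≠ δ x).card : ℝ) := by exact_mod_cast h1
  have c2 : (pm δ u : ℝ) ≤ (pm γ₁ u : ℝ)
      + (u:ℝ) * ((Finset.univ.filter fun x => γ₁ x ≠ δ x).card : ℝ) := by exact_mod_cast h2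
  rw [abs_le]
  constructor <;> linarith

lemma cc_pm (α : Equiv.Perm X) (u : ℕ) (hu : 1 ≤ u) :
    |(cycleCount α u : ℝ) - (pm α u : ℝ)/u| ≤ 1 := by
  have hcc : cycleCount α u = pm α u / u := rfl
  have h1 : (pm α u / u) * u ≤ pm α u := Nat.div_mul_le_self _ _
  have h2 : pm α u < (pm α u / u + 1) * u := by
    have hm := Nat.mod_lt (pm α u) (show 0 < u by omega)
    have hd := Nat.div_add_mod (pm α u) u
    have hexp : (pm α u / u + 1) * u = u * (pm α u / u) + u := by ring
    omega
  have hu0 : (0:ℝ) < u := by positivity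
  have r1 : ((pm α u / u : ℕ) : ℝ) * u ≤ pm α u := by exact_mod_cast h1
  have r2 : (pm α u : ℝ) < (((pm α u / u : ℕ) : ℝ) + 1) * u := by exact_mod_cast h2
  rw [hcc, abs_le]
  constructor
  · have : (pm α u : ℝ)/u < ((pm α u / u : ℕ) : ℝ) + 1 := by
      rw [div_lt_iff₀ hu0]
      exact r2
    linarith
  · have : ((pm α u / u : ℕ) : ℝ) ≤ (pm α u : ℝ)/u := by
      rw [le_div_iff₀ hu0]
      exact r1
    linarith

lemma exists_ultralim {I : Type*} (ω : Ultrafilter I) (f : I → ℝ)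
    (h : ∀ i, f i ∈ Set.Icc (0:ℝ) 1) :
    ∃ L, Filter.Tendsto f (ω : Filter I) (nhds L) := by
  obtain ⟨L, _, hL⟩ := (isCompact_Icc (a := (0:ℝ)) (b := 1)).ultrafilter_le_nhds (ω.map f)
    (by
      rw [Ultrafilter.coe_map, Filter.le_principal_iff, Filter.mem_map]
      exact Filter.univ_mem' h)
  refine ⟨L, ?_⟩
  rwa [Filter.Tendsto, ← Ultrafilter.coe_map]

lemma key_tendsto {I : Type*} (τ : I → ℕ) (ω : Ultrafilter I)
    (hτ : Filter.Tendsto τ (ω : Filter I) Filter.atTop)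
    (α : ∀ i, Equiv.Perm (Fin (τ i))) (u : ℕ) (hu : 1 ≤ u) :
    Filter.Tendsto (fun i => (pm (α i) u : ℝ)/(u * τ i)) (ω : Filter I)
      (nhds (avgCycle τ ω α u)) := by
  set f := fun i => (cycleCount (α i) u : ℝ)/τ i with hfdef
  have hccle : ∀ i, cycleCount (α i) u ≤ τ i := by
    intro i
    have : cycleCount (α i) u = pm (α i) u / u := rfl
    have h2 : pm (α i) u ≤ τ i := by
      have := sum_pm_le (α i) {u}
      simp only [Finset.sum_singleton, Fintype.card_fin] at this
      exact this
    calc cycleCount (α i) u ≤ pm (α i) u := Nat.div_le_self _ _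
      _ ≤ τ i := h2
  have hf : ∀ i, f i ∈ Set.Icc (0:ℝ) 1 := by
    intro i
    constructor
    · positivity
    · rcases Nat.eq_zero_or_pos (τ i) with h0 | h0
      · have : ((τ i : ℕ) : ℝ) = 0 := by exact_mod_cast h0
        rw [hfdef]
        simp only [this, div_zero]
        norm_num
      · have hp : (0:ℝ) < τ i := by exact_mod_cast h0
        rw [hfdef, div_le_one hp]
        exact_mod_cast hccle i
  obtain ⟨L, hL⟩ := exists_ultralim ω f hf
  have havg : avgCycle τ ω α u = L := hL.limUnder_eq
  rw [havg]
  have hdiff : ∀ i, |(pm (α i) u : ℝ)/(u * τ i) - f i| ≤ 1/(τ i : ℝ) := by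
    intro i
    rcases Nat.eq_zero_or_pos (τ i) with h0 | h0
    · have hz : ((τ i : ℕ) : ℝ) = 0 := by exact_mod_cast h0
      rw [hfdef]
      simp only [hz, mul_zero, div_zero]
      norm_num
    · have hp : (0:ℝ) < τ i := by exact_mod_cast h0
      have h2 := cc_pm (α i) u hu
      have he : (pm (α i) u : ℝ)/(u * τ i) - f i
          = ((pm (α i) u : ℝ)/u - cycleCount (α i) u)/(τ i) := by
        rw [hfdef]
        field_simp
      rw [he, abs_div, abs_of_pos hp]
      gcongr
      rw [abs_sub_comm]
      exact h2
  have htR : Filter.Tendsto (fun i => (τ i : ℝ)) (ω : Filter I) Filter.atTop :=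
    tendsto_natCast_atTop_atTop.comp hτ
  have hinv : Filter.Tendsto (fun i => 1/(τ i : ℝ)) (ω : Filter I) (nhds 0) :=
    Filter.Tendsto.div_atTop tendsto_const_nhds htR
  have h0 : Filter.Tendsto (fun i => (pm (α i) u : ℝ)/(u * τ i) - f i) (ω : Filter I) (nhds 0) :=
    squeeze_zero_norm' (Filter.Eventually.of_forall fun i => by
      simpa [Real.norm_eq_abs] using hdiff i) hinv
  have := h0.add hL
  simp only [zero_add] at this
  refine this.congr fun i => ?_
  ring
end AuxSofic


open AuxSofic Function Finset

/-- Conjugacy classes of `𝔖(τ/ω)` are determined by the average cycle numbers: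
`π` and `ρ` are conjugate modulo `N = { σ : lim_ω #_fix(σ(i))/τ(i) = 1 }` if and only if
`#_t(π) = #_t(ρ)` for all `t ≥ 1`. -/
theorem conj_iff_avg_cycle_eq {I : Type*} (τ : I → ℕ) (ω : Ultrafilter I)
    (hτ : Tendsto τ (ω : Filter I) atTop)
    (π ρ : ∀ i, Equiv.Perm (Fin (τ i))) :
    (∃ σ : ∀ i, Equiv.Perm (Fin (τ i)),
        Tendsto (fun i => (fixCount (((σ * π * σ⁻¹) * ρ⁻¹) i) : ℝ) / τ i)
          (ω : Filter I) (nhds 1)) ↔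
      ∀ t : ℕ, 1 ≤ t → avgCycle τ ω π t = avgCycle τ ω ρ t := by
  classical
  constructor
  · rintro ⟨σ, hσ⟩ t ht
    have hπ := key_tendsto τ ω hτ π t ht
    have hρ := key_tendsto τ ω hτ ρ t ht
    have hg : Tendsto (fun i => 1 - (fixCount (((σ * π * σ⁻¹) * ρ⁻¹) i) : ℝ)/τ i)
        (ω : Filter I) (nhds 0) := by
      have h2 := (tendsto_const_nhds (x := (1:ℝ)) (f := (ω : Filter I))).sub hσ
      simpa using h2
    have hbound : ∀ᶠ i in (ω : Filter I),
        |(pm (π i) t : ℝ)/(t * τ i) - (pm (ρ i) t : ℝ)/(t * τ i)|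
          ≤ 1 - (fixCount (((σ * π * σ⁻¹) * ρ⁻¹) i) : ℝ)/τ i := by
      filter_upwards [hτ.eventually_ge_atTop 1] with i hi
      set Fv := (fixCount (((σ * π * σ⁻¹) * ρ⁻¹) i) : ℝ) with hFv
      have hτpos : (0:ℝ) < τ i := by exact_mod_cast hi
      have ht0 : (0:ℝ) < t := by positivity
      set γ₁ := σ i * π i * (σ i)⁻¹ with hγ₁
      have hform : ((σ * π * σ⁻¹) * ρ⁻¹) i = γ₁ * (ρ i)⁻¹ := rfl
      have hD := fixCount_filter γ₁ (ρ i)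
      rw [Fintype.card_fin] at hD
      set D := (Finset.univ.filter fun x => γ₁ x ≠ (ρ i) x).card with hDdef
      have hpmeq : pm (π i) t = pm γ₁ t := (pm_conj (σ i) (π i) t).symm
      have hdle := pm_diff_le γ₁ (ρ i) t
      rw [← hDdef] at hdle
      have hfix : (fixCount (((σ * π * σ⁻¹) * ρ⁻¹) i) : ℝ) + D = τ i := by
        rw [hform]
        exact_mod_cast hD
      have he : (pm (π i) t : ℝ)/(t * τ i) - (pm (ρ i) t : ℝ)/(t * τ i)
          = ((pm γ₁ t : ℝ) - (pm (ρ i) t : ℝ))/(t * τ i) := by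
        rw [hpmeq]
        ring
      rw [he, abs_div, abs_of_pos (by positivity : (0:ℝ) < (t:ℝ) * τ i)]
      rw [div_le_iff₀ (by positivity : (0:ℝ) < (t:ℝ) * τ i)]
      calc |(pm γ₁ t : ℝ) - (pm (ρ i) t : ℝ)| ≤ (t:ℝ) * D := hdle
        _ = (1 - Fv/τ i) * ((t:ℝ) * τ i) := by
            have hDv : (D:ℝ) = (τ i : ℝ) - Fv := by linarith
            rw [hDv]
            field_simp
    have hdiff0 : Tendsto (fun i => (pm (π i) t : ℝ)/(t * τ i) - (pm (ρ i) t : ℝ)/(t * τ i))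
        (ω : Filter I) (nhds 0) :=
      squeeze_zero_norm' (hbound.mono fun i hi => by simpa [Real.norm_eq_abs] using hi) hg
    have hsub := hπ.sub hρ
    have := tendsto_nhds_unique hsub hdiff0
    linarith
  · intro h
    have hex : ∀ i, ∃ σ0 : Equiv.Perm (Fin (τ i)), ∀ σ1 : Equiv.Perm (Fin (τ i)),
        fixCount ((σ1 * π i * σ1⁻¹) * (ρ i)⁻¹) ≤ fixCount ((σ0 * π i * σ0⁻¹) * (ρ i)⁻¹) :=
      fun i => Finite.exists_max _
    choose σ hσmax using hex
    refine ⟨σ, ?_⟩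
    rw [Metric.tendsto_nhds]
    intro ε hε
    obtain ⟨T, hT⟩ := exists_nat_gt ((8:ℝ)/ε)
    have hT0 : (0:ℝ) < T := lt_trans (by positivity) hT
    have hT1 : (4:ℝ)/(T+1) < ε/2 := by
      rw [div_lt_iff₀ (by positivity)]
      rw [div_lt_iff₀ hε] at hT
      nlinarith
    have hhead : Tendsto
        (fun i => ∑ u ∈ Finset.range (T+1), |(pm (π i) u : ℝ)/u - (pm (ρ i) u : ℝ)/u|/(τ i))
        (ω : Filter I) (nhds 0) := by
      have hterm : ∀ u ∈ Finset.range (T+1), Tendsto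
          (fun i => |(pm (π i) u : ℝ)/u - (pm (ρ i) u : ℝ)/u|/(τ i)) (ω : Filter I) (nhds 0) := by
        intro u _
        rcases Nat.eq_zero_or_pos u with h0 | h0
        · subst h0
          have : (fun i => |(pm (π i) 0 : ℝ)/(0:ℕ) - (pm (ρ i) 0 : ℝ)/(0:ℕ)|/(τ i))
              = fun _ => (0:ℝ) := by
            funext i
            simp
          rw [this]
          exact tendsto_const_nhds
        · have hπ := key_tendsto τ ω hτ π u h0
          have hρ := key_tendsto τ ω hτ ρ u h0
          rw [h u h0] at hπ
          have hd := hπ.sub hρ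
          rw [sub_self] at hd
          have habs := hd.abs
          rw [abs_zero] at habs
          refine habs.congr fun i => ?_
          rw [show (pm (π i) u : ℝ)/(u * τ i) = ((pm (π i) u : ℝ)/u)/(τ i) by
              rw [div_div],
            show (pm (ρ i) u : ℝ)/(u * τ i) = ((pm (ρ i) u : ℝ)/u)/(τ i) by
              rw [div_div],
            div_sub_div_same, abs_div, abs_of_nonneg (by positivity : (0:ℝ) ≤ (τ i : ℝ))]
      have := tendsto_finset_sum (Finset.range (T+1)) hterm
      simpa using this
    have hev1 : ∀ᶠ i in (ω : Filter I),
        ∑ u ∈ Finset.range (T+1), |(pm (π i) u : ℝ)/u - (pm (ρ i) u : ℝ)/u|/(τ i) < ε/8 := by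
      rw [Metric.tendsto_nhds] at hhead
      refine (hhead (ε/8) (by positivity)).mono fun i hi => ?_
      rw [Real.dist_eq, sub_zero] at hi
      exact lt_of_abs_lt hi
    have hev2 : ∀ᶠ i in (ω : Filter I), T ≤ τ i := hτ.eventually_ge_atTop T
    filter_upwards [hev1, hev2] with i hi1 hi2
    -- per-index estimate
    have hτ1 : 1 ≤ τ i := by
      have : 1 ≤ T := by
        by_contra hc
        push_neg at hc
        interval_cases T
        · norm_num at hT0
      omega
    have hτpos : (0:ℝ) < τ i := by exact_mod_cast hτ1
    obtain ⟨σ0, hσ0⟩ := lemF (τ i + 1) (τ i) (π i) (ρ i) (Fintype.card_fin _)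
      (Fintype.card_fin _) (by omega)
    have herrle : (errSet σ0 (π i) (ρ i)).card ≤ τ i := by
      calc (errSet σ0 (π i) (ρ i)).card ≤ Fintype.card (Fin (τ i)) := Finset.card_le_univ _
        _ = τ i := Fintype.card_fin _
    have hfix0 : (fixCount ((σ0 * π i * σ0⁻¹) * (ρ i)⁻¹) : ℝ)
        = (τ i : ℝ) - (errSet σ0 (π i) (ρ i)).card := by
      have := fixCount_eq σ0 (π i) (ρ i)
      rw [Fintype.card_fin] at this
      rw [this, Nat.cast_sub herrle]
    have hmax := hσmax i σ0
    have hfixle : fixCount ((σ i * π i * (σ i)⁻¹) * (ρ i)⁻¹) ≤ τ i := by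
      calc fixCount ((σ i * π i * (σ i)⁻¹) * (ρ i)⁻¹)
          ≤ Fintype.card (Fin (τ i)) := Finset.card_filter_le _ _
        _ = τ i := Fintype.card_fin _
    -- Psi split
    have hPsisplit : Psi (τ i + 1) (π i) (ρ i)
        ≤ (∑ u ∈ Finset.range (T+1), |(pm (π i) u : ℝ)/u - (pm (ρ i) u : ℝ)/u|)
          + 2 * (τ i : ℝ)/(T+1) := by
      have hsplit : Psi (τ i + 1) (π i) (ρ i)
          = (∑ u ∈ Finset.range (T+1), |(pm (π i) u : ℝ)/u - (pm (ρ i) u : ℝ)/u|)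
            + ∑ u ∈ Finset.Ico (T+1) (τ i + 1), |(pm (π i) u : ℝ)/u - (pm (ρ i) u : ℝ)/u| := by
        unfold Psi
        rw [Finset.range_eq_Ico, Finset.range_eq_Ico]
        rw [Finset.sum_Ico_consecutive _ (by omega : 0 ≤ T+1) (by omega : T+1 ≤ τ i + 1)]
      rw [hsplit]
      have htail : ∑ u ∈ Finset.Ico (T+1) (τ i + 1), |(pm (π i) u : ℝ)/u - (pm (ρ i) u : ℝ)/u|
          ≤ 2 * (τ i : ℝ)/(T+1) := by
        have hterm2 : ∀ u ∈ Finset.Ico (T+1) (τ i + 1),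
            |(pm (π i) u : ℝ)/u - (pm (ρ i) u : ℝ)/u|
              ≤ ((pm (π i) u : ℝ) + (pm (ρ i) u : ℝ))/(T+1) := by
          intro u hu
          rw [Finset.mem_Ico] at hu
          have hu0 : (0:ℝ) < u := by
            have : 1 ≤ u := by omega
            exact_mod_cast this
          have hTu : ((T:ℝ)+1) ≤ u := by exact_mod_cast hu.1
          have h1 : |(pm (π i) u : ℝ)/u - (pm (ρ i) u : ℝ)/u|
              ≤ (pm (π i) u : ℝ)/u + (pm (ρ i) u : ℝ)/u := by
            have := abs_sub ((pm (π i) u : ℝ)/u) ((pm (ρ i) u : ℝ)/u)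
            calc |(pm (π i) u : ℝ)/u - (pm (ρ i) u : ℝ)/u|
                ≤ |(pm (π i) u : ℝ)/u| + |(pm (ρ i) u : ℝ)/u| := abs_sub _ _
              _ = (pm (π i) u : ℝ)/u + (pm (ρ i) u : ℝ)/u := by
                  rw [abs_of_nonneg (by positivity), abs_of_nonneg (by positivity)]
          have h2 : (pm (π i) u : ℝ)/u ≤ (pm (π i) u : ℝ)/(T+1) :=
            div_le_div_of_nonneg_left (by positivity) (by positivity) hTu
          have h3 : (pm (ρ i) u : ℝ)/u ≤ (pm (ρ i) u : ℝ)/(T+1) :=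
            div_le_div_of_nonneg_left (by positivity) (by positivity) hTu
          calc |(pm (π i) u : ℝ)/u - (pm (ρ i) u : ℝ)/u|
              ≤ (pm (π i) u : ℝ)/u + (pm (ρ i) u : ℝ)/u := h1
            _ ≤ (pm (π i) u : ℝ)/(T+1) + (pm (ρ i) u : ℝ)/(T+1) := by linarith
            _ = ((pm (π i) u : ℝ) + (pm (ρ i) u : ℝ))/(T+1) := by ring
        calc ∑ u ∈ Finset.Ico (T+1) (τ i + 1), |(pm (π i) u : ℝ)/u - (pm (ρ i) u : ℝ)/u|
            ≤ ∑ u ∈ Finset.Ico (T+1) (τ i + 1),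
                ((pm (π i) u : ℝ) + (pm (ρ i) u : ℝ))/(T+1) := Finset.sum_le_sum hterm2
          _ = ((∑ u ∈ Finset.Ico (T+1) (τ i + 1), (pm (π i) u : ℝ))
              + ∑ u ∈ Finset.Ico (T+1) (τ i + 1), (pm (ρ i) u : ℝ))/(T+1) := by
              rw [← Finset.sum_add_distrib, Finset.sum_div]
          _ ≤ 2 * (τ i : ℝ)/(T+1) := by
              have hπsum : ∑ u ∈ Finset.Ico (T+1) (τ i + 1), (pm (π i) u : ℝ) ≤ (τ i : ℝ) := by
                have := sum_pm_le (π i) (Finset.Ico (T+1) (τ i + 1))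
                rw [Fintype.card_fin] at this
                exact_mod_cast this
              have hρsum : ∑ u ∈ Finset.Ico (T+1) (τ i + 1), (pm (ρ i) u : ℝ) ≤ (τ i : ℝ) := by
                have := sum_pm_le (ρ i) (Finset.Ico (T+1) (τ i + 1))
                rw [Fintype.card_fin] at this
                exact_mod_cast this
              rw [div_le_div_iff_of_pos_right (by positivity)]
              linarith
      linarith
    -- combine
    have hform : ((σ * π * σ⁻¹) * ρ⁻¹) i = (σ i * π i * (σ i)⁻¹) * (ρ i)⁻¹ := rfl
    rw [Real.dist_eq, hform]
    have hfR : (fixCount ((σ i * π i * (σ i)⁻¹) * (ρ i)⁻¹) : ℝ) ≤ τ i := by exact_mod_cast hfixle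
    have hfR2 : (fixCount ((σ0 * π i * σ0⁻¹) * (ρ i)⁻¹) : ℝ)
        ≤ (fixCount ((σ i * π i * (σ i)⁻¹) * (ρ i)⁻¹) : ℝ) := by exact_mod_cast hmax
    have habsval : |(fixCount ((σ i * π i * (σ i)⁻¹) * (ρ i)⁻¹) : ℝ)/τ i - 1|
        = 1 - (fixCount ((σ i * π i * (σ i)⁻¹) * (ρ i)⁻¹) : ℝ)/τ i := by
      rw [abs_of_nonpos]
      · ring
      · rw [sub_nonpos, div_le_one hτpos]
        exact hfR
    rw [habsval]
    set F := (fixCount ((σ i * π i * (σ i)⁻¹) * (ρ i)⁻¹) : ℝ) with hF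
    set E := ((errSet σ0 (π i) (ρ i)).card : ℝ) with hE
    set P := Psi (τ i + 1) (π i) (ρ i) with hP
    set H := ∑ u ∈ Finset.range (T+1), |(pm (π i) u : ℝ)/u - (pm (ρ i) u : ℝ)/u| with hH
    have hτne : (τ i : ℝ) ≠ 0 := ne_of_gt hτpos
    have hTne : ((T:ℝ)+1) ≠ 0 := by positivity
    have d1 : 1 - F/τ i ≤ E/τ i := by
      rw [sub_le_iff_le_add, ← add_div, le_div_iff₀ hτpos, one_mul]
      have : (τ i : ℝ) - E ≤ F := by
        rw [← hfix0]
        exact hfR2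
      linarith
    have d2 : E/τ i ≤ 2*P/τ i := by
      rw [div_le_div_iff_of_pos_right hτpos]
      exact hσ0
    have d3 : 2*P/τ i ≤ 2*(H/τ i) + 4/((T:ℝ)+1) := by
      have hm : 2 * (τ i : ℝ) / ((T:ℝ)+1) = 2 * ((τ i : ℝ) / ((T:ℝ)+1)) := by ring
      rw [hm] at hPsisplit
      have e1 : 2*P/τ i ≤ (2*H + 4*((τ i : ℝ)/((T:ℝ)+1)))/τ i := by
        rw [div_le_div_iff_of_pos_right hτpos]
        linarith
      have e2 : (2*H + 4*((τ i : ℝ)/((T:ℝ)+1)))/τ i = 2*(H/τ i) + 4/((T:ℝ)+1) := by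
        have e3 : ((τ i : ℝ)/((T:ℝ)+1))/(τ i) = 1/((T:ℝ)+1) := by
          rw [div_div, mul_comm, ← div_div, div_self hτne]
        rw [add_div, mul_div_assoc, mul_div_assoc, e3]
        ring
      linarith
    have d4 : H/τ i = ∑ u ∈ Finset.range (T+1),
        |(pm (π i) u : ℝ)/u - (pm (ρ i) u : ℝ)/u|/(τ i) := Finset.sum_div _ _ _
    rw [d4] at d3
    linarith
end

section
/- A group Γ is sofic if and only if there is an injective group homomorphism Γ → 𝔖(τ/ω) for some index set I of cardinality at most |Γ|, function τ : I → ℕ with lim_ω τ = ∞, and ultrafilter ω on I. In particular every group 𝔖(τ/ω) is itself sofic. -/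
open Filter

/-- A group `Γ` is sofic if for every finite `F ⊆ Γ` and `0 < ε < 1` there are `n` and a
map `φ : Γ → S_n` with `φ(1) = 1`, `#_fix(φ(e)φ(f)φ(ef)⁻¹) ≥ (1−ε)n` for `e, f ∈ F`, and
`#_fix(φ(e)) ≤ εn` for `1 ≠ e ∈ F`. -/
def IsSofic (Γ : Type*) [Group Γ] : Prop :=
  ∀ (F : Finset Γ) (ε : ℝ), 0 < ε → ε < 1 →
    ∃ (n : ℕ), 0 < n ∧ ∃ φ : Γ → Equiv.Perm (Fin n),
      φ 1 = 1 ∧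
      (∀ e ∈ F, ∀ f ∈ F,
        (1 - ε) * n ≤ (fixCount (φ e * φ f * (φ (e * f))⁻¹) : ℝ)) ∧
      (∀ e ∈ F, e ≠ 1 → (fixCount (φ e) : ℝ) ≤ ε * n)

section AuxiliaryLemmas

open Equiv

variable {X Y K : Type*} [Fintype X] [DecidableEq X] [Fintype Y] [DecidableEq Y]
  [Fintype K] [DecidableEq K]

theorem fixCount_le_s11 (α : Perm X) : fixCount α ≤ Fintype.card X :=
  (Finset.card_filter_le _ _).trans (le_of_eq (Finset.card_univ))

theorem fixCount_one : fixCount (1 : Perm X) = Fintype.card X := by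
  simp [fixCount, Finset.card_univ]

theorem fixCount_inv_s11 (α : Perm X) : fixCount α⁻¹ = fixCount α := by
  unfold fixCount
  congr 1
  ext x
  simp only [Finset.mem_filter, Finset.mem_univ, true_and]
  constructor
  · intro h; conv_lhs => rw [← h]
    simp
  · intro h; conv_lhs => rw [← h]
    simp

theorem fixCount_mul (a b : Perm X) :
    fixCount a + fixCount b ≤ fixCount (a * b) + Fintype.card X := by
  classical
  unfold fixCount
  set A := Finset.univ.filter fun x => a x = x with hA
  set B := Finset.univ.filter fun x => b x = x with hB
  have hsub : A ∩ B ⊆ Finset.univ.filter fun x => (a * b) x = x := by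
    intro x hx
    simp only [hA, hB, Finset.mem_inter, Finset.mem_filter, Finset.mem_univ, true_and] at hx ⊢
    rw [Equiv.Perm.mul_apply, hx.2, hx.1]
  calc A.card + B.card = (A ∩ B).card + (A ∪ B).card :=
        (Finset.card_inter_add_card_union A B).symm
    _ ≤ (Finset.univ.filter fun x => (a * b) x = x).card + Fintype.card X := by
        have h1 : (A ∩ B).card ≤ (Finset.univ.filter fun x => (a * b) x = x).card :=
          Finset.card_le_card hsub
        have h2 : (A ∪ B).card ≤ Fintype.card X :=
          (Finset.card_le_card (Finset.subset_univ _)).trans (le_of_eq Finset.card_univ)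
        omega

theorem fixCount_permCongr (e : X ≃ Y) (σ : Perm X) :
    fixCount (e.permCongr σ) = fixCount σ := by
  classical
  unfold fixCount
  rw [show (Finset.univ.filter fun y => e.permCongr σ y = y)
      = (Finset.univ.filter fun x => σ x = x).map e.toEmbedding by
    ext y
    simp only [Finset.mem_map, Finset.mem_filter, Finset.mem_univ, true_and,
      Equiv.permCongr_apply, Equiv.coe_toEmbedding]
    constructor
    · intro h
      exact ⟨e.symm y, by rw [show σ (e.symm y) = e.symm y from e.injective (by simpa using (Finset.mem_filter.1 h).2)],
        by simp⟩
    · rintro ⟨x, hx, rfl⟩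
      exact Finset.mem_filter.2 ⟨Finset.mem_univ _, by simp [hx]⟩]
  exact Finset.card_map _

theorem fixCount_prodCongr (σ : Perm X) (τ : Perm Y) :
    fixCount (Equiv.prodCongr σ τ) = fixCount σ * fixCount τ := by
  classical
  unfold fixCount
  rw [← Finset.card_product]
  congr 1
  ext ⟨x, y⟩
  simp [Finset.mem_product, Prod.ext_iff]

theorem fixCount_arrowCongr (σ : Perm X) :
    fixCount (Equiv.arrowCongr (Equiv.refl K) σ) = fixCount σ ^ Fintype.card K := by
  classical
  unfold fixCount
  rw [show (Finset.univ.filter fun f : K → X => Equiv.arrowCongr (Equiv.refl K) σ f = f)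
      = Fintype.piFinset fun _ : K => Finset.univ.filter fun x => σ x = x by
    ext f
    simp [Fintype.mem_piFinset, funext_iff]]
  rw [Fintype.card_piFinset]
  simp [Finset.prod_const, Finset.card_univ]

/-- Conjugation by an equivalence, as a homomorphism of permutation groups. -/
def permCongrHom (e : X ≃ Y) : Perm X →* Perm Y where
  toFun σ := e.permCongr σ
  map_one' := by ext y; simp
  map_mul' a b := by ext y; simp [Equiv.Perm.mul_apply]

/-- Diagonal action on functions, as a homomorphism of permutation groups. -/
def ampHom (K : Type*) : Perm X →* Perm (K → X) where
  toFun σ := Equiv.arrowCongr (Equiv.refl K) σ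
  map_one' := by ext f; simp
  map_mul' a b := by ext f; simp [Equiv.Perm.mul_apply]

/-- Acting on the first factor of a product, as a homomorphism of permutation groups. -/
def padHom (Y : Type*) : Perm X →* Perm (X × Y) where
  toFun σ := Equiv.prodCongr σ (Equiv.refl Y)
  map_one' := by ext p <;> rfl
  map_mul' a b := by ext p <;> rfl

theorem exists_uniform_delta {α : Type*} (F : Finset α) (P : α → ℝ → Prop)
    (hmono : ∀ g δ δ', 0 < δ' → δ' ≤ δ → P g δ → P g δ')
    (h : ∀ g ∈ F, ∃ δ, 0 < δ ∧ δ ≤ 1 ∧ P g δ) :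
    ∃ δ, 0 < δ ∧ δ ≤ 1 ∧ ∀ g ∈ F, P g δ := by
  classical
  induction F using Finset.induction_on with
  | empty => exact ⟨1, one_pos, le_refl 1, by simp⟩
  | @insert a s ha ih =>
    obtain ⟨δa, hδa0, hδa1, hPa⟩ := h a (Finset.mem_insert_self a s)
    obtain ⟨δs, hδs0, hδs1, hPs⟩ := ih fun g hg => h g (Finset.mem_insert_of_mem hg)
    refine ⟨min δa δs, lt_min hδa0 hδs0, (min_le_left _ _).trans hδa1, ?_⟩
    intro g hg
    rcases Finset.mem_insert.1 hg with rfl | hg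
    · exact hmono g δa _ (lt_min hδa0 hδs0) (min_le_left _ _) hPa
    · exact hmono g δs _ (lt_min hδa0 hδs0) (min_le_right _ _) (hPs g hg)

theorem fixCount_le1 {m : ℕ} (σ : Perm (Fin m)) : (fixCount σ : ℝ) / m ≤ 1 := by
  rcases Nat.eq_zero_or_pos m with h | h
  · simp [h]
  · rw [div_le_one (by exact_mod_cast h)]
    exact_mod_cast (fixCount_le_s11 σ).trans_eq (Fintype.card_fin m)

theorem forward {Γ : Type u} [Group Γ] (hs : IsSofic Γ) :
    ∃ (I : Type u) (τ : I → ℕ) (ω : Ultrafilter I),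
        Tendsto τ (ω : Filter I) atTop ∧
        Cardinal.mk I ≤ max (Cardinal.mk Γ) Cardinal.aleph0 ∧
        ∃ φ : Γ → ∀ i, Equiv.Perm (Fin (τ i)),
          (∀ g h : Γ,
            Tendsto (fun i => (fixCount ((φ g * φ h * (φ (g * h))⁻¹) i) : ℝ) / τ i)
              (ω : Filter I) (nhds 1)) ∧
          (∀ g : Γ, g ≠ 1 →
            ¬ Tendsto (fun i => (fixCount ((φ g) i) : ℝ) / τ i) (ω : Filter I) (nhds 1)) := by
  classical
  have H : ∀ i : Finset Γ × ULift.{u} ℕ, ∃ n : ℕ, 0 < n ∧ ∃ φ : Γ → Perm (Fin n),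
      φ 1 = 1 ∧
      (∀ e ∈ i.1, ∀ f ∈ i.1,
        (1 - 1/(i.2.down+2)) * n ≤ (fixCount (φ e * φ f * (φ (e*f))⁻¹) : ℝ)) ∧
      (∀ e ∈ i.1, e ≠ 1 → (fixCount (φ e) : ℝ) ≤ (1/(i.2.down+2)) * n) := by
    intro i
    refine hs i.1 (1/(i.2.down+2)) (by positivity) ?_
    rw [div_lt_one (by positivity)]
    have : (0:ℝ) ≤ (i.2.down : ℝ) := Nat.cast_nonneg _
    linarith
  choose n hn φ hφ1 hφ2 hφ3 using H
  have hmem : ∀ (F : Finset Γ) (k : ℕ),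
      {i : Finset Γ × ULift.{u} ℕ | F ⊆ i.1 ∧ k ≤ i.2.down} ∈ Ultrafilter.of
        (atTop : Filter (Finset Γ × ULift.{u} ℕ)) := by
    intro F k
    refine Ultrafilter.of_le (atTop : Filter (Finset Γ × ULift.{u} ℕ)) ?_
    refine mem_of_superset (mem_atTop ((F, ULift.up k) : Finset Γ × ULift.{u} ℕ)) ?_
    rintro ⟨F', k'⟩ h
    obtain ⟨h1, h2⟩ := Prod.mk_le_mk.1 h
    exact ⟨h1, h2⟩
  let Ψ : ∀ i : Finset Γ × ULift.{u} ℕ,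
      Perm (Fin (n i)) →* Perm (Fin (n i * (i.2.down + 1))) :=
    fun i => (_root_.permCongrHom finProdFinEquiv).comp (padHom (Fin (i.2.down + 1)))
  have hΨfix : ∀ (i : Finset Γ × ULift.{u} ℕ) (σ : Perm (Fin (n i))),
      fixCount (Ψ i σ) = fixCount σ * (i.2.down + 1) := by
    intro i σ
    show fixCount (finProdFinEquiv.permCongr (Equiv.prodCongr σ (Equiv.refl _))) = _
    rw [fixCount_permCongr, fixCount_prodCongr]
    have h1 : (Equiv.refl (Fin (i.2.down + 1))) = (1 : Perm (Fin (i.2.down + 1))) := rfl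
    rw [h1, fixCount_one, Fintype.card_fin]
  have hratio : ∀ (i : Finset Γ × ULift.{u} ℕ) (σ : Perm (Fin (n i))),
      (fixCount (Ψ i σ) : ℝ) / (n i * (i.2.down + 1) : ℕ) = (fixCount σ : ℝ) / n i := by
    intro i σ
    rw [hΨfix]
    have h1 : ((i.2.down : ℝ) + 1) ≠ 0 := by positivity
    push_cast
    rw [mul_div_mul_right _ _ h1]
  refine ⟨Finset Γ × ULift.{u} ℕ, fun i => n i * (i.2.down + 1), Ultrafilter.of atTop,
    ?_, ?_, fun g i => Ψ i (φ i g), ?_, ?_⟩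
  · rw [tendsto_atTop]
    intro b
    filter_upwards [hmem ∅ b] with i hi
    calc b ≤ i.2.down + 1 := le_trans hi.2 (Nat.le_succ _)
      _ ≤ n i * (i.2.down + 1) := Nat.le_mul_of_pos_left _ (hn i)
  · have h1 : (Cardinal.mk (Finset Γ)) ≤ max (Cardinal.mk Γ) Cardinal.aleph0 := by
      cases finite_or_infinite Γ with
      | inl h => exact le_max_of_le_right Cardinal.mk_le_aleph0
      | inr h => exact le_max_of_le_left (le_of_eq (Cardinal.mk_finset_of_infinite Γ))
    have h2 : (Cardinal.mk (ULift.{u} ℕ)) ≤ max (Cardinal.mk Γ) Cardinal.aleph0 :=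
      le_max_of_le_right Cardinal.mk_le_aleph0
    calc Cardinal.mk (Finset Γ × ULift.{u} ℕ)
        = Cardinal.mk (Finset Γ) * Cardinal.mk (ULift.{u} ℕ) := by
          rw [Cardinal.mk_prod, Cardinal.lift_id, Cardinal.lift_id]
      _ ≤ max (Cardinal.mk Γ) Cardinal.aleph0 * max (Cardinal.mk Γ) Cardinal.aleph0 :=
          mul_le_mul' h1 h2
      _ = max (Cardinal.mk Γ) Cardinal.aleph0 := Cardinal.mul_eq_self (le_max_right _ _)
  · intro g h
    rw [Metric.tendsto_nhds]
    intro η hη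
    obtain ⟨k₀, hk₀⟩ := exists_nat_one_div_lt hη
    filter_upwards [hmem {g, h} k₀] with i hi
    have hgmem : g ∈ i.1 := hi.1 (Finset.mem_insert_self _ _)
    have hhmem : h ∈ i.1 := hi.1 (Finset.mem_insert_of_mem (Finset.mem_singleton_self _))
    have key : ((fun g i => Ψ i (φ i g)) g * (fun g i => Ψ i (φ i g)) h *
        ((fun g i => Ψ i (φ i g)) (g * h))⁻¹) i = Ψ i (φ i g * φ i h * (φ i (g * h))⁻¹) := by
      simp only [Pi.mul_apply, Pi.inv_apply, map_mul, map_inv]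
    rw [key, hratio]
    have hnpos : (0:ℝ) < n i := by exact_mod_cast hn i
    have hlow : 1 - 1/(i.2.down+2) ≤ (fixCount (φ i g * φ i h * (φ i (g * h))⁻¹) : ℝ) / n i := by
      rw [le_div_iff₀ hnpos]
      exact hφ2 i g hgmem h hhmem
    have hup : (fixCount (φ i g * φ i h * (φ i (g * h))⁻¹) : ℝ) / n i ≤ 1 := fixCount_le1 _
    have hsmalleps : 1/((i.2.down:ℝ)+2) ≤ 1/((k₀:ℝ)+1) := by
      apply one_div_le_one_div_of_le (by positivity)
      have : (k₀:ℝ) ≤ (i.2.down : ℝ) := by exact_mod_cast hi.2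
      linarith
    rw [Real.dist_eq, abs_sub_comm, abs_of_nonneg (by linarith)]
    linarith
  · intro g hg1 hT
    rw [Metric.tendsto_nhds] at hT
    have hS := hT (1/3) (by norm_num)
    obtain ⟨i, hi1, hi2⟩ := Ultrafilter.nonempty_of_mem (Filter.inter_mem (hmem {g} 1) hS)
    have hgmem : g ∈ i.1 := hi1.1 (Finset.mem_singleton_self _)
    have hnpos : (0:ℝ) < n i := by exact_mod_cast hn i
    have hi2' : dist ((fixCount (Ψ i (φ i g)) : ℝ) / (n i * (i.2.down + 1) : ℕ)) 1 < 1/3 := hi2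
    rw [hratio] at hi2'
    have hle : (fixCount (φ i g) : ℝ) / n i ≤ 1/(i.2.down+2) := by
      rw [div_le_iff₀ hnpos]
      exact hφ3 i g hgmem hg1
    have h13 : 1/((i.2.down:ℝ)+2) ≤ 1/3 := by
      apply one_div_le_one_div_of_le (by norm_num)
      have : (1:ℝ) ≤ (i.2.down : ℝ) := by exact_mod_cast hi1.2
      linarith
    have hup : (fixCount (φ i g) : ℝ) / n i ≤ 1 := fixCount_le1 _
    rw [Real.dist_eq] at hi2'
    have := abs_lt.1 hi2'
    have h1 : (fixCount (φ i g) : ℝ) / n i ≤ 1/3 := le_trans hle h13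
    linarith [this.1]

set_option maxHeartbeats 1000000 in
theorem backward {Γ : Type u} [Group Γ] {I : Type u} (τ : I → ℕ) (ω : Ultrafilter I)
    (hτ : Tendsto τ (ω : Filter I) atTop)
    (φ : Γ → ∀ i, Equiv.Perm (Fin (τ i)))
    (hhom : ∀ g h : Γ,
      Tendsto (fun i => (fixCount ((φ g * φ h * (φ (g * h))⁻¹) i) : ℝ) / τ i)
        (ω : Filter I) (nhds 1))
    (hinj : ∀ g : Γ, g ≠ 1 →
      ¬ Tendsto (fun i => (fixCount ((φ g) i) : ℝ) / τ i) (ω : Filter I) (nhds 1)) :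
    IsSofic Γ := by
  classical
  intro F ε hε0 hε1
  -- uniform separation constant δ for the non-identity elements of F
  obtain ⟨δ, hδ0, hδ1, hδ⟩ := exists_uniform_delta (F.erase 1)
      (fun g δ => {i | (fixCount (φ g i) : ℝ) / τ i ≤ 1 - δ} ∈ ω)
      (by
        intro g δ δ' h0 hle hmem
        refine mem_of_superset hmem ?_
        intro i hi
        simp only [Set.mem_setOf_eq] at hi ⊢
        linarith)
      (by
        intro g hg
        have hne := hinj g (Finset.ne_of_mem_erase hg)
        rw [Metric.tendsto_nhds] at hne
        push_neg at hne
        obtain ⟨η, hη0, hη⟩ := hne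
        refine ⟨min η 1, lt_min hη0 one_pos, min_le_right _ _, ?_⟩
        have hc : {i | ¬ dist ((fixCount (φ g i) : ℝ) / τ i) 1 < η} ∈ ω := by
          rw [show {i | ¬ dist ((fixCount (φ g i) : ℝ) / τ i) 1 < η}
              = {i | dist ((fixCount (φ g i) : ℝ) / τ i) 1 < η}ᶜ from rfl,
            Ultrafilter.compl_mem_iff_notMem]
          exact fun hlt => by
            obtain ⟨i, hi1, hi2⟩ := Ultrafilter.nonempty_of_mem (Filter.inter_mem hlt hη)
            exact absurd (show dist ((fixCount (φ g i) : ℝ) / τ i) 1 < η from hi1) (not_lt.2 hi2)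
        refine mem_of_superset hc ?_
        intro i hi
        simp only [Set.mem_setOf_eq, not_lt] at hi ⊢
        have hup : (fixCount (φ g i) : ℝ) / τ i ≤ 1 := fixCount_le1 _
        rw [Real.dist_eq, abs_sub_comm, abs_of_nonneg (by linarith)] at hi
        have : min η 1 ≤ η := min_le_left _ _
        linarith)
  -- the amplification exponent k and homomorphism tolerance η
  obtain ⟨k₀, hk₀⟩ := exists_pow_lt_of_lt_one hε0 (by linarith : 1 - δ < 1)
  set k := max k₀ 1 with hk
  have hk1 : 1 ≤ k := le_max_right _ _
  have hkε : (1 - δ) ^ k ≤ ε :=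
    le_trans (pow_le_pow_of_le_one (by linarith) (by linarith) (le_max_left _ _)) hk₀.le
  set η := ε / (2 * k) with hηdef
  have hkpos : (0:ℝ) < k := by exact_mod_cast hk1
  have hη0 : 0 < η := by positivity
  have hη1 : η ≤ 1 := by
    rw [hηdef, div_le_one (by positivity)]
    have : (1:ℝ) ≤ (k:ℝ) := by exact_mod_cast hk1
    linarith
  have hbern : ∀ c : ℝ, 0 ≤ c → c ≤ 2 * η → 1 - (k : ℝ) * c ≤ (1 - c) ^ k := by
    intro c hc0 hc2
    have := one_add_mul_le_pow (a := -c) (by linarith) k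
    calc 1 - (k:ℝ) * c = 1 + (k:ℝ) * (-c) := by ring
      _ ≤ (1 + -c) ^ k := this
      _ = (1 - c) ^ k := by ring_nf
  -- choose a good index i₀
  have hpairs : ∀ᶠ i in (ω : Filter I), ∀ g ∈ F, ∀ h ∈ F,
      1 - η ≤ (fixCount ((φ g * φ h * (φ (g * h))⁻¹) i) : ℝ) / τ i := by
    rw [Filter.eventually_all_finset]
    intro g hg
    rw [Filter.eventually_all_finset]
    intro h hh
    exact (hhom g h).eventually (eventually_ge_nhds (by linarith))
  have hone : ∀ᶠ i in (ω : Filter I),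
      1 - η ≤ (fixCount ((φ 1 * φ 1 * (φ ((1:Γ) * 1))⁻¹) i) : ℝ) / τ i :=
    (hhom 1 1).eventually (eventually_ge_nhds (by linarith))
  have hτ1 : ∀ᶠ i in (ω : Filter I), 1 ≤ τ i := hτ.eventually_ge_atTop 1
  have hsmall : ∀ᶠ i in (ω : Filter I), ∀ g ∈ F.erase 1,
      (fixCount (φ g i) : ℝ) / τ i ≤ 1 - δ := by
    rw [Filter.eventually_all_finset]
    intro g hg
    exact hδ g hg
  obtain ⟨i₀, hpairs, hone, hτ1, hsmall⟩ :=
    (hpairs.and (hone.and (hτ1.and hsmall))).exists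
  set n := τ i₀ with hn
  have hnpos : (0:ℝ) < n := by exact_mod_cast hτ1
  set p : Γ → Equiv.Perm (Fin n) := fun g => φ g i₀ with hp
  set N := Fintype.card (Fin k → Fin n) with hN
  have hNn : N = n ^ k := by
    rw [hN, Fintype.card_fun, Fintype.card_fin, Fintype.card_fin]
  have hNpos : 0 < N := by
    rw [hNn]; exact pow_pos hτ1 k
  have hNR : (N : ℝ) = (n : ℝ) ^ k := by rw [hNn]; push_cast; ring
  set B : Equiv.Perm (Fin n) →* Equiv.Perm (Fin N) :=
    (_root_.permCongrHom (Fintype.equivFin (Fin k → Fin n))).comp (ampHom (Fin k)) with hB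
  have hBfix : ∀ σ : Equiv.Perm (Fin n), fixCount (B σ) = fixCount σ ^ k := by
    intro σ
    show fixCount ((Fintype.equivFin (Fin k → Fin n)).permCongr
      (Equiv.arrowCongr (Equiv.refl (Fin k)) σ)) = _
    rw [fixCount_permCongr, fixCount_arrowCongr, Fintype.card_fin]
  have hBfixR : ∀ σ : Equiv.Perm (Fin n), (fixCount (B σ) : ℝ) = (fixCount σ : ℝ) ^ k := by
    intro σ; rw [hBfix]; push_cast; ring
  -- the three basic fixed-point estimates at i₀
  have hcnt : ∀ {x : ℕ}, 1 - η ≤ (x : ℝ) / n → (1 - η) * n ≤ (x : ℝ) := by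
    intro x hx
    rwa [le_div_iff₀ hnpos] at hx
  have hfix1 : (1 - η) * n ≤ (fixCount (p 1) : ℝ) := by
    have h1 : φ (1:Γ) * φ 1 * (φ ((1:Γ) * 1))⁻¹ = φ 1 := by
      rw [one_mul, mul_inv_cancel_right]
    rw [h1] at hone
    exact hcnt hone
  have hfixpair : ∀ e ∈ F, ∀ f ∈ F,
      (1 - η) * n ≤ (fixCount (p e * p f * (p (e * f))⁻¹) : ℝ) := by
    intro e he f hf
    exact hcnt (hpairs e he f hf)
  have hfixsmall : ∀ e ∈ F, e ≠ 1 → (fixCount (p e) : ℝ) ≤ (1 - δ) * n := by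
    intro e he hne
    have := hsmall e (Finset.mem_erase.2 ⟨hne, he⟩)
    rwa [div_le_iff₀ hnpos] at this
  -- the sofic approximation
  set ψ : Γ → Equiv.Perm (Fin N) := fun g => if g = 1 then 1 else B (p g) with hψdef
  have hψ1 : ψ 1 = 1 := if_pos rfl
  have hψn : ∀ g : Γ, g ≠ 1 → ψ g = B (p g) := fun g hg => if_neg hg
  have hNineq : (1 - ε) * N ≤ (N : ℝ) := by nlinarith [hNR, pow_pos hnpos k]
  refine ⟨N, hNpos, ψ, hψ1, ?_, ?_⟩
  · intro e he f hf
    by_cases he1 : e = 1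
    · subst he1
      rw [show (1:Γ) * f = f from one_mul f, hψ1, one_mul, mul_inv_cancel, fixCount_one,
        Fintype.card_fin]
      exact hNineq
    · by_cases hf1 : f = 1
      · subst hf1
        rw [show e * (1:Γ) = e from mul_one e, hψ1, mul_one, mul_inv_cancel, fixCount_one,
          Fintype.card_fin]
        exact hNineq
      · by_cases hef : e * f = 1
        · rw [hψn e he1, hψn f hf1, hef, hψ1, inv_one, mul_one, ← map_mul]
          rw [hBfixR]
          -- fixCount (p e * p f) ≥ (1 - 2η) n
          have hkey : fixCount (p e * p f * (p (e * f))⁻¹) + fixCount (p (e * f)) ≤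
              fixCount (p e * p f) + n := by
            have h2 := fixCount_mul (p e * p f * (p (e * f))⁻¹) (p (e * f))
            rw [inv_mul_cancel_right, Fintype.card_fin] at h2
            exact h2
          have hef1 : (fixCount (p (e * f)) : ℝ) = (fixCount (p 1) : ℝ) := by rw [hef]
          have hlow : (1 - 2 * η) * n ≤ (fixCount (p e * p f) : ℝ) := by
            have hQ : (fixCount (p e * p f * (p (e * f))⁻¹) : ℝ) + fixCount (p (e * f)) ≤
                (fixCount (p e * p f) : ℝ) + n := by exact_mod_cast hkey
            have := hfixpair e he f hf
            rw [hef1] at hQ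
            linarith [hfix1]
          have h2η : (0:ℝ) ≤ 1 - 2 * η := by
            have : 2 * η = ε / k := by rw [hηdef]; field_simp
            have hεk : ε / k ≤ ε := by
              rw [div_le_iff₀ hkpos]
              have hk1R : (1:ℝ) ≤ (k:ℝ) := by exact_mod_cast hk1
              nlinarith
            linarith
          calc (1 - ε) * N ≤ (1 - 2 * η) ^ k * (n:ℝ) ^ k := by
                rw [hNR]
                have hb := hbern (2 * η) (by positivity) (le_refl _)
                have h2k : (k:ℝ) * (2 * η) = ε := by
                  rw [hηdef]; field_simp
                rw [h2k] at hb
                have hnk : (0:ℝ) ≤ (n:ℝ) ^ k := by positivity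
                nlinarith [pow_pos hnpos k]
            _ = ((1 - 2 * η) * n) ^ k := by rw [mul_pow]
            _ ≤ (fixCount (p e * p f) : ℝ) ^ k :=
                pow_le_pow_left₀ (mul_nonneg h2η (Nat.cast_nonneg n)) hlow k
        · have hcomp : B (p e) * B (p f) * (B (p (e * f)))⁻¹
              = B (p e * p f * (p (e * f))⁻¹) := by
            rw [map_mul, map_mul, map_inv]
          rw [hψn e he1, hψn f hf1, hψn (e * f) hef, hcomp, hBfixR]
          have hlow := hfixpair e he f hf
          have hη' : (0:ℝ) ≤ 1 - η := by linarith
          calc (1 - ε) * N ≤ (1 - η) ^ k * (n:ℝ) ^ k := by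
                rw [hNR]
                have hb := hbern η (by positivity) (by linarith)
                have hkη : (k:ℝ) * η = ε / 2 := by rw [hηdef]; field_simp
                rw [hkη] at hb
                nlinarith [pow_pos hnpos k]
            _ = ((1 - η) * n) ^ k := by rw [mul_pow]
            _ ≤ (fixCount (p e * p f * (p (e * f))⁻¹) : ℝ) ^ k :=
                pow_le_pow_left₀ (mul_nonneg hη' (Nat.cast_nonneg n)) hlow k
  · intro e he hne
    rw [hψn e hne, hBfixR]
    have hlow := hfixsmall e he hne
    calc (fixCount (p e) : ℝ) ^ k ≤ ((1 - δ) * n) ^ k := by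
          apply pow_le_pow_left₀ (Nat.cast_nonneg _) hlow
      _ = (1 - δ) ^ k * (n:ℝ) ^ k := by rw [mul_pow]
      _ ≤ ε * N := by
          rw [hNR]
          have hnk : (0:ℝ) ≤ (n:ℝ) ^ k := by positivity
          nlinarith [pow_pos hnpos k]

end AuxiliaryLemmas

/-- A group `Γ` is sofic iff it embeds into a universal sofic group `𝔖(τ/ω)` for some
index set `I` of cardinality at most `|Γ|` (up to `ℵ₀`), `τ : I → ℕ` with `lim_ω τ = ∞`,
and ultrafilter `ω` on `I`.  The embedding into the quotient `𝔖(τ/ω) = 𝔖(τ)/N` is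
expressed by a map `φ : Γ → 𝔖(τ)` which is a homomorphism modulo
`N = { σ : lim_ω #_fix(σ(i))/τ(i) = 1 }` and whose kernel modulo `N` is trivial. -/
theorem isSofic_iff_embeds_in_universal_sofic_group {Γ : Type u} [Group Γ] :
    IsSofic Γ ↔
      ∃ (I : Type u) (τ : I → ℕ) (ω : Ultrafilter I),
        Tendsto τ (ω : Filter I) atTop ∧
        Cardinal.mk I ≤ max (Cardinal.mk Γ) Cardinal.aleph0 ∧
        ∃ φ : Γ → ∀ i, Equiv.Perm (Fin (τ i)),
          (∀ g h : Γ,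
            Tendsto (fun i => (fixCount ((φ g * φ h * (φ (g * h))⁻¹) i) : ℝ) / τ i)
              (ω : Filter I) (nhds 1)) ∧
          (∀ g : Γ, g ≠ 1 →
            ¬ Tendsto (fun i => (fixCount ((φ g) i) : ℝ) / τ i) (ω : Filter I) (nhds 1)) :=
  ⟨fun hs => forward hs,
   fun ⟨_, τ, ω, hτ, _, φ, hhom, hinj⟩ => backward τ ω hτ φ hhom hinj⟩
end

section
/- Every countable sofic group is hyperlinear: it embeds as a group of unitaries into the tracial ultrapower R^ω of the hyperfinite II₁ factor R, equivalently (in a form avoiding von Neumann algebras) for every finite subset F and ε > 0 there exist n and unitary n×n permutation matrices u_g (g ∈ F) with |tr(u_g u_h u_{gh}*) − 1| < ε for g,h,gh ∈ F and |tr(u_g)| < ε for g ≠ 1, where tr is the normalized trace. -/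
/-- The complex permutation matrix of `π ∈ S_n`. -/
def permMatrix {n : ℕ} (π : Equiv.Perm (Fin n)) : Matrix (Fin n) (Fin n) ℂ :=
  fun i j => if π j = i then 1 else 0

/-! A sofic approximation `φ`, read through permutation matrices `u_g = permMatrix (φ g)`, is
already a hyperlinear one: `π ↦ permMatrix π` is multiplicative with `permMatrix π⁻¹ = (permMatrix π)ᴴ`,
and the normalized trace of a permutation matrix is its proportion of fixed points. Hence
`tr(u_g u_h u_{gh}*)` is the proportion of points fixed by `φ g * φ h * (φ (g * h))⁻¹`, at least
`1 - δ`, and `tr(u_g)` is at most `δ` for `g ≠ 1`. -/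

lemma fixCount_le_card {X : Type*} [Fintype X] [DecidableEq X] (α : Equiv.Perm X) :
    fixCount α ≤ Fintype.card X :=
  Finset.card_filter_le _ _

section permMatrix

variable {n : ℕ}

lemma permMatrix_eq_permMatrix_inv (π : Equiv.Perm (Fin n)) :
    permMatrix π = π⁻¹.permMatrix ℂ := by
  ext i j
  simp only [permMatrix, Equiv.Perm.permMatrix, Equiv.toPEquiv_apply, PEquiv.toMatrix_apply,
    Option.mem_some_iff, Equiv.Perm.inv_eq_iff_eq]
  exact if_congr eq_comm rfl rfl

lemma permMatrix_mul_mul_conjTranspose (σ τ ρ : Equiv.Perm (Fin n)) :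
    permMatrix σ * permMatrix τ * (permMatrix ρ).conjTranspose = permMatrix (σ * τ * ρ⁻¹) := by
  simp only [permMatrix_eq_permMatrix_inv, Matrix.conjTranspose_permMatrix, ← Matrix.permMatrix_mul,
    mul_inv_rev, inv_inv, mul_assoc]

lemma trace_permMatrix (π : Equiv.Perm (Fin n)) : (permMatrix π).trace = fixCount π := by
  simp only [Matrix.trace, Matrix.diag, permMatrix, fixCount, Finset.card_filter]
  push_cast
  rfl

lemma trace_permMatrix_div (π : Equiv.Perm (Fin n)) :
    (permMatrix π).trace / n = ((fixCount π / n : ℝ) : ℂ) := by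
  rw [trace_permMatrix]
  push_cast
  rfl

lemma norm_trace_permMatrix_div_le {π : Equiv.Perm (Fin n)} {δ : ℝ} (hn : 0 < n)
    (hπ : (fixCount π : ℝ) ≤ δ * n) : ‖(permMatrix π).trace / n‖ ≤ δ := by
  rw [trace_permMatrix_div, Complex.norm_real, Real.norm_of_nonneg (by positivity)]
  exact (div_le_iff₀ (by positivity)).2 hπ

lemma norm_trace_permMatrix_div_sub_one_le {π : Equiv.Perm (Fin n)} {δ : ℝ} (hn : 0 < n)
    (hπ : (1 - δ) * n ≤ fixCount π) : ‖(permMatrix π).trace / n - 1‖ ≤ δ := by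
  have hn' : (0 : ℝ) < n := by exact_mod_cast hn
  have hle : (fixCount π : ℝ) / n ≤ 1 :=
    (div_le_one hn').2 (by simpa using fixCount_le_card π)
  have hge : 1 - δ ≤ (fixCount π : ℝ) / n := (le_div_iff₀ hn').2 hπ
  rw [trace_permMatrix_div, ← Complex.ofReal_one, ← Complex.ofReal_sub, Complex.norm_real,
    Real.norm_of_nonpos (by linarith)]
  linarith

end permMatrix

theorem countable_sofic_is_hyperlinear_general {Γ : Type*} [Group Γ]
    (hΓ : IsSofic Γ) (F : Finset Γ) (ε : ℝ) (hε : 0 < ε) :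
    ∃ (n : ℕ), 0 < n ∧ ∃ u : Γ → Matrix (Fin n) (Fin n) ℂ,
      (∀ g : Γ, ∃ π : Equiv.Perm (Fin n), u g = permMatrix π) ∧
      (∀ g ∈ F, ∀ h ∈ F, g * h ∈ F →
        ‖(u g * u h * (u (g * h)).conjTranspose).trace / (n : ℂ) - 1‖ < ε) ∧
      (∀ g ∈ F, g ≠ 1 → ‖(u g).trace / (n : ℂ)‖ < ε) := by
  obtain ⟨δ, hδ0, hδ⟩ := exists_between (lt_min hε one_pos)
  obtain ⟨hδε, hδ1⟩ := lt_min_iff.1 hδ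
  obtain ⟨n, hn, φ, -, hmul, hfix⟩ := hΓ F δ hδ0 hδ1
  refine ⟨n, hn, fun g => permMatrix (φ g), fun g => ⟨φ g, rfl⟩, ?_, ?_⟩
  · intro g hg h hh _
    rw [permMatrix_mul_mul_conjTranspose]
    exact (norm_trace_permMatrix_div_sub_one_le hn (hmul g hg h hh)).trans_lt hδε
  · intro g hg hg1
    exact (norm_trace_permMatrix_div_le hn (hfix g hg hg1)).trans_lt hδε

/-- Every countable sofic group is hyperlinear, in the matrix form: for every finite
subset `F` and `ε > 0` there are `n` and unitary permutation matrices `u_g` (`g ∈ Γ`)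
with `|tr(u_g u_h u_{gh}*) − 1| < ε` whenever `g, h, gh ∈ F` and `|tr(u_g)| < ε` for
`1 ≠ g ∈ F`, where `tr` is the normalized trace. -/
theorem countable_sofic_is_hyperlinear {Γ : Type*} [Group Γ] [Countable Γ]
    (hΓ : IsSofic Γ) (F : Finset Γ) (ε : ℝ) (hε : 0 < ε) :
    ∃ (n : ℕ), 0 < n ∧ ∃ u : Γ → Matrix (Fin n) (Fin n) ℂ,
      (∀ g : Γ, ∃ π : Equiv.Perm (Fin n), u g = permMatrix π) ∧
      (∀ g ∈ F, ∀ h ∈ F, g * h ∈ F →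
        ‖(u g * u h * (u (g * h)).conjTranspose).trace / (n : ℂ) - 1‖ < ε) ∧
      (∀ g ∈ F, g ≠ 1 → ‖(u g).trace / (n : ℂ)‖ < ε) :=
  countable_sofic_is_hyperlinear_general hΓ F ε hε
end

section
/- If in the space Σ_m of marked groups on m generators a sequence (Γ_n, S_n) of sofic marked groups converges (in the Gromov–Hausdorff topology on marked groups) to (Γ, S), then Γ is sofic. -/
open scoped Pointwise

section SoficApprox

variable {Γ H : Type*} [Group Γ] [Group H]

def IsSoficApprox {n : ℕ} (φ : Γ → Equiv.Perm (Fin n)) (F : Set Γ) (ε : ℝ) : Prop :=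
  φ 1 = 1 ∧
    (∀ e ∈ F, ∀ f ∈ F, (1 - ε) * n ≤ (fixCount (φ e * φ f * (φ (e * f))⁻¹) : ℝ)) ∧
    (∀ e ∈ F, e ≠ 1 → (fixCount (φ e) : ℝ) ≤ ε * n)

theorem isSofic_iff_forall_isSoficApprox :
    IsSofic Γ ↔ ∀ (F : Finset Γ) (ε : ℝ), 0 < ε → ε < 1 →
      ∃ n, 0 < n ∧ ∃ φ : Γ → Equiv.Perm (Fin n), IsSoficApprox φ (F : Set Γ) ε :=
  Iff.rfl

structure IsLocalEmbedding (t : Γ → H) (E : Set Γ) : Prop where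
  injOn : Set.InjOn t E
  map_mul : ∀ a ∈ E, ∀ b ∈ E, a * b ∈ E → t (a * b) = t a * t b

namespace IsLocalEmbedding

variable {t : Γ → H} {E : Set Γ}

theorem map_one (ht : IsLocalEmbedding t E) (h1 : (1 : Γ) ∈ E) : t 1 = 1 := by
  have h := ht.map_mul 1 h1 1 h1 (by rwa [mul_one])
  rwa [mul_one, left_eq_mul] at h

theorem map_ne_one (ht : IsLocalEmbedding t E) (h1 : (1 : Γ) ∈ E) {a : Γ} (ha : a ∈ E)
    (hne : a ≠ 1) : t a ≠ 1 := fun h =>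
  hne (ht.injOn ha h1 (h.trans (ht.map_one h1).symm))

end IsLocalEmbedding

theorem IsSoficApprox.comp_isLocalEmbedding {n : ℕ} {φ : H → Equiv.Perm (Fin n)} {t : Γ → H}
    {F E : Set Γ} {ε : ℝ} (hφ : IsSoficApprox φ (t '' E) ε) (ht : IsLocalEmbedding t E)
    (h1 : (1 : Γ) ∈ E) (hF : F ⊆ E) (hFF : F * F ⊆ E) : IsSoficApprox (φ ∘ t) F ε := by
  obtain ⟨hφ1, hφmul, hφfix⟩ := hφ
  refine ⟨by simp [ht.map_one h1, hφ1], fun e he f hf => ?_, fun e he hne => ?_⟩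
  · have hef : e * f ∈ E := hFF (Set.mul_mem_mul he hf)
    simpa [ht.map_mul e (hF he) f (hF hf) hef] using
      hφmul (t e) (Set.mem_image_of_mem t (hF he)) (t f) (Set.mem_image_of_mem t (hF hf))
  · exact hφfix (t e) (Set.mem_image_of_mem t (hF he)) (ht.map_ne_one h1 (hF he) hne)

end SoficApprox

/-- Convergence in `Σ_m` is encoded by its consequence: every finite `F ⊆ Γ` embeds into some
`Γ_k` by a map that is injective on `F` and multiplicative on products staying in `F`. -/
theorem limit_of_sofic_marked_groups_is_sofic
    {Γ : Type u} [Group Γ] (G : ℕ → Type u) [∀ n, Group (G n)]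
    (hsofic : ∀ n, IsSofic (G n))
    (hlim : ∀ F : Finset Γ, ∃ (k : ℕ) (t : Γ → G k),
      Set.InjOn t (F : Set Γ) ∧
      ∀ a ∈ F, ∀ b ∈ F, a * b ∈ F → t (a * b) = t a * t b) :
    IsSofic Γ := by
  classical
  rw [isSofic_iff_forall_isSoficApprox]
  intro F ε hε hε1
  set E : Finset Γ := insert 1 (F ∪ F * F)
  obtain ⟨k, t, hinj, hmul⟩ := hlim E
  obtain ⟨n, hn, φ, hφ⟩ :=
    (isSofic_iff_forall_isSoficApprox.mp (hsofic k)) (E.image t) ε hε hε1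
  rw [Finset.coe_image] at hφ
  refine ⟨n, hn, φ ∘ t, hφ.comp_isLocalEmbedding ⟨hinj, hmul⟩ (by simp [E])
    (fun e he => by simp [E, he]) (fun x hx => by simp [E, hx])⟩
end
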